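/- arXiv:0704.2410 — 6 statements merged into one kernel-verified Lean document; each statement's English description precedes it below -/
import Mathlib

section
/- Let K be a field, A = J_2, and B ∈ M_3(K) with rank(B) = 2, σ_1(B) = σ_2(B) = σ_3(B) = 0, tr(AB) = 0 and tr(A²B²) = 0. Then one of the following holds: (1) B is strictly upper triangular, i.e. B = [[0, t_1, t_2],[0, 0, t_3],[0, 0, 0]] for some t_1, t_2, t_3 ∈ K; (2) B = T·A·T⁻¹ where T = [[t_3·t_4, t_1, t_2],[t_3, t_4, t_5],[0, 1, 0]] for some t_1,…,t_5 ∈ K with det(T) ≠ 0; (3) B = T·A·T⁻¹ where T = [[t_1, t_2, t_3·t_4],[t_3, 0, t_4],[1, 0, 0]] for some t_1,…,t_4 ∈ K with det(T) ≠ 0. -/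
/-!
Cayley–Hamilton makes `B` nilpotent, and the trace conditions read `B₁₀ + B₂₁ = 0` and
`(B²)₂₀ = 0`. If `B₂₀ = 0` they force `B` upper triangular, hence strictly upper triangular.
Otherwise `B` is conjugate to `J₂` through a Jordan chain `B²v, Bv, v`, which is where the
matrices `T` come from. If `(B²)₁₀ ≠ 0`, take `v = e₀ / B₂₀`. If `(B²)₁₀ = 0`, then `B²e₀ = 0`
and `v` is a multiple of `(B₁₀, B₂₀, 0)`, which `B` maps to `-(B₀₀B₂₁ - B₀₁B₂₀) e₀`; the rank
condition keeps this coefficient non-zero, since otherwise `Be₀` and `(B₁₀, B₂₀, 0)` would be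
independent vectors in the kernel.
-/

open Matrix

noncomputable section

/-- `σ_k(M)`: the signed coefficients of the characteristic polynomial,
`det (λ E - M) = λ^n - σ_1(M) λ^{n-1} + ⋯ + (-1)^n σ_n(M)`. -/
def sigmaC {R : Type} [CommRing R] {n : ℕ} (k : ℕ) (M : Matrix (Fin n) (Fin n) R) : R :=
  (-1) ^ k * (Matrix.charpoly M).coeff (n - k)

/-- The rank-one nilpotent Jordan matrix `J₁`. -/
def J1 (K : Type) [Field K] : Matrix (Fin 3) (Fin 3) K := !![0, 1, 0; 0, 0, 0; 0, 0, 0]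

/-- The rank-two nilpotent Jordan matrix `J₂`. -/
def J2 (K : Type) [Field K] : Matrix (Fin 3) (Fin 3) K := !![0, 1, 0; 0, 0, 1; 0, 0, 0]

open Polynomial in
theorem charpoly_eq_X_pow_of_sigmaC_eq_zero {R : Type} [CommRing R] [Nontrivial R] {n : ℕ}
    (M : Matrix (Fin n) (Fin n) R) (h : ∀ k, 1 ≤ k → k ≤ n → sigmaC k M = 0) :
    M.charpoly = X ^ n := by
  ext j
  rw [coeff_X_pow]
  rcases lt_trichotomy j n with hj | rfl | hj
  · have := h (n - j) (by omega) (by omega)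
    rw [sigmaC, Nat.sub_sub_self hj.le] at this
    simpa [hj.ne] using this
  · simpa using M.charpoly_monic.coeff_natDegree
  · rw [if_neg hj.ne', coeff_eq_zero_of_natDegree_lt (by simpa using hj)]

theorem pow_eq_zero_of_sigmaC_eq_zero {R : Type} [CommRing R] [Nontrivial R] {n : ℕ}
    (M : Matrix (Fin n) (Fin n) R) (h : ∀ k, 1 ≤ k → k ≤ n → sigmaC k M = 0) : M ^ n = 0 := by
  simpa [charpoly_eq_X_pow_of_sigmaC_eq_zero M h] using M.aeval_self_charpoly

theorem sigmaC_one_eq_trace {R : Type} [CommRing R] {n : ℕ} [NeZero n]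
    (M : Matrix (Fin n) (Fin n) R) : sigmaC 1 M = M.trace := by
  simp [sigmaC, Matrix.trace_eq_neg_charpoly_coeff]

theorem rank_add_two_le_of_mulVec_eq_zero {K m n : Type*} [Field K] [Fintype m] [Fintype n]
    {B : Matrix m n K} {x y : n → K} (hxy : LinearIndependent K ![x, y])
    (hx : B *ᵥ x = 0) (hy : B *ᵥ y = 0) : B.rank + 2 ≤ Fintype.card n := by
  have hspan : Submodule.span K (Set.range ![x, y]) ≤ LinearMap.ker B.mulVecLin := by
    rw [Submodule.span_le, Set.range_subset_iff]
    intro j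
    fin_cases j <;> simpa
  have hker := Submodule.finrank_mono hspan
  rw [finrank_span_eq_card hxy, Fintype.card_fin] at hker
  have hrank_nullity := B.mulVecLin.finrank_range_add_finrank_ker
  rw [Module.finrank_fintype_fun_eq_card] at hrank_nullity
  rw [Matrix.rank]
  omega

section J2

variable {K : Type} [Field K]

theorem trace_J2_mul (M : Matrix (Fin 3) (Fin 3) K) : (J2 K * M).trace = M 1 0 + M 2 1 := by
  simp [J2, Matrix.trace_fin_three, Matrix.vecMul, dotProduct, Fin.sum_univ_three]

theorem trace_J2_sq_mul (M : Matrix (Fin 3) (Fin 3) K) : (J2 K ^ 2 * M).trace = M 2 0 := by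
  simp [J2, sq, Matrix.trace_fin_three, Matrix.vecMul, dotProduct, Fin.sum_univ_three]

theorem mul_eq_mul_J2_of_chain {B T : Matrix (Fin 3) (Fin 3) K} (hB : B ^ 3 = 0)
    (h2 : B *ᵥ Tᵀ 2 = Tᵀ 1) (h1 : B *ᵥ Tᵀ 1 = Tᵀ 0) : B * T = T * J2 K := by
  have h0 : B *ᵥ Tᵀ 0 = 0 := by
    rw [← h1, ← h2, Matrix.mulVec_mulVec, Matrix.mulVec_mulVec, ← pow_two, ← pow_succ, hB,
      Matrix.zero_mulVec]
  ext r j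
  change (B *ᵥ Tᵀ j) r = (T * J2 K) r j
  fin_cases j <;> simp [h0, h1, h2, J2, Matrix.mul_apply, Fin.sum_univ_three]

theorem eq_conj_J2_of_chain {B T : Matrix (Fin 3) (Fin 3) K} (hB : B ^ 3 = 0) (hT : T.det ≠ 0)
    (h2 : B *ᵥ Tᵀ 2 = Tᵀ 1) (h1 : B *ᵥ Tᵀ 1 = Tᵀ 0) : B = T * J2 K * T⁻¹ := by
  rw [← mul_eq_mul_J2_of_chain hB h2 h1, Matrix.mul_assoc,
    Matrix.mul_nonsing_inv _ (isUnit_iff_ne_zero.mpr hT), Matrix.mul_one]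

end J2

section Entries

variable {K : Type} [Field K] {a b c d e f g h i : K}

theorem upper_diag_eq_zero_of_pow_three_eq_zero
    (hN : !![a, b, c; 0, e, f; 0, 0, i] ^ 3 = 0) : a = 0 ∧ e = 0 ∧ i = 0 := by
  have h00 := congr_fun₂ hN 0 0
  have h11 := congr_fun₂ hN 1 1
  have h22 := congr_fun₂ hN 2 2
  simp [pow_succ, Matrix.mul_apply, Fin.sum_univ_three] at h00 h11 h22
  exact ⟨h00, h11, h22⟩

theorem linearIndependent_pair_of_ne_zero (hg : g ≠ 0) :
    LinearIndependent K ![![a, d, g], ![d, g, 0]] := by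
  refine LinearIndependent.pair_iff.mpr fun s t hst => ?_
  have h1 := congr_fun hst 1
  have h2 := congr_fun hst 2
  simp only [Pi.add_apply, Pi.smul_apply, Matrix.cons_val, smul_eq_mul, Pi.zero_apply] at h1 h2
  have hs : s = 0 := by simpa [hg] using h2
  exact ⟨hs, by simpa [hs, hg] using h1⟩

-- the last entry of `B³e₀ = 0`, where `B²e₀ = ((B²)₀₀, (B²)₁₀, 0)` and `h = -d`
theorem mul_sq_zero_zero_eq_mul_sq_one_zero (hN : !![a, b, c; d, e, f; g, h, i] ^ 3 = 0)
    (hdh : d + h = 0) (h20 : g * a + h * d + i * g = 0) :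
    g * (a * a + b * d + c * g) = d * (d * a + e * d + f * g) := by
  have hN20 := congr_fun₂ hN 2 0
  simp [pow_succ, Matrix.mul_apply, Fin.sum_univ_three] at hN20
  linear_combination hN20 - i * h20 - (d * a + e * d + f * g) * hdh

theorem exists_conj_J2_form₂ (hN : !![a, b, c; d, e, f; g, h, i] ^ 3 = 0)
    (hdh : d + h = 0) (h20 : g * a + h * d + i * g = 0) (hg : g ≠ 0)
    (hQ : d * a + e * d + f * g ≠ 0) :
    ∃ t1 t2 t3 t4 t5 : K,
      (!![t3 * t4, t1, t2; t3, t4, t5; 0, 1, 0] : Matrix (Fin 3) (Fin 3) K).det ≠ 0 ∧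
      !![a, b, c; d, e, f; g, h, i] = !![t3 * t4, t1, t2; t3, t4, t5; 0, 1, 0] * J2 K *
        (!![t3 * t4, t1, t2; t3, t4, t5; 0, 1, 0])⁻¹ := by
  have hPQ := mul_sq_zero_zero_eq_mul_sq_one_zero hN hdh h20
  set Q := d * a + e * d + f * g with hQ_def
  have hdet : (!![Q / g * (d / g), a / g, 1 / g; Q / g, d / g, 0; 0, 1, 0] :
      Matrix (Fin 3) (Fin 3) K).det ≠ 0 := by
    simp [Matrix.det_fin_three, hg, hQ]
  refine ⟨a / g, 1 / g, Q / g, d / g, 0, hdet, eq_conj_J2_of_chain hN hdet ?_ ?_⟩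
  · ext r; fin_cases r <;> simp [Matrix.mulVec, dotProduct, Fin.sum_univ_three] <;> field_simp
  · ext r; fin_cases r <;> simp [Matrix.mulVec, dotProduct, Fin.sum_univ_three] <;> field_simp
    · linear_combination hPQ
    · linear_combination hQ_def
    · linear_combination h20

theorem exists_conj_J2_form₃ (hN : !![a, b, c; d, e, f; g, h, i] ^ 3 = 0)
    (hrk : (!![a, b, c; d, e, f; g, h, i]).rank = 2) (htrace : a + e + i = 0)
    (hdh : d + h = 0) (h20 : g * a + h * d + i * g = 0) (hg : g ≠ 0)
    (hQ : d * a + e * d + f * g = 0) :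
    ∃ t1 t2 t3 t4 : K,
      (!![t1, t2, t3 * t4; t3, 0, t4; 1, 0, 0] : Matrix (Fin 3) (Fin 3) K).det ≠ 0 ∧
      !![a, b, c; d, e, f; g, h, i] = !![t1, t2, t3 * t4; t3, 0, t4; 1, 0, 0] * J2 K *
        (!![t1, t2, t3 * t4; t3, 0, t4; 1, 0, 0])⁻¹ := by
  have hP : a * a + b * d + c * g = 0 := by
    simpa [hQ, hg] using mul_sq_zero_zero_eq_mul_sq_one_zero hN hdh h20
  have hde : d * d + e * g = 0 := by linear_combination d * hdh - h20 + g * htrace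
  have hker₁ : !![a, b, c; d, e, f; g, h, i] *ᵥ ![a, d, g] = 0 := by
    ext r; fin_cases r <;> simp [Matrix.mulVec, dotProduct, Fin.sum_univ_three]
    exacts [hP, hQ, h20]
  have hβ : a * h - b * g ≠ 0 := by
    intro hβ
    have hker₂ : !![a, b, c; d, e, f; g, h, i] *ᵥ ![d, g, 0] = 0 := by
      ext r; fin_cases r <;> simp [Matrix.mulVec, dotProduct, Fin.sum_univ_three]
      · linear_combination a * hdh - hβ
      · exact hde
      · linear_combination g * hdh
    have := rank_add_two_le_of_mulVec_eq_zero (linearIndependent_pair_of_ne_zero hg) hker₁ hker₂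
    simp [hrk] at this
  set β := a * h - b * g with hβ_def
  have hdet : (!![a / g, 1 / g, d / g * (-1 / β); d / g, 0, -1 / β; 1, 0, 0] :
      Matrix (Fin 3) (Fin 3) K).det ≠ 0 := by
    simp [Matrix.det_fin_three, hg, hβ]
  -- the Jordan chain of `v = -(d, g, 0) / (g β)`
  refine ⟨a / g, 1 / g, d / g, -1 / β, hdet, eq_conj_J2_of_chain hN hdet ?_ ?_⟩
  · ext r; fin_cases r <;> simp [Matrix.mulVec, dotProduct, Fin.sum_univ_three] <;> field_simp
    · linear_combination -hβ_def - a * hdh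
    · linear_combination -hde
    · linear_combination -hdh
  · ext r; fin_cases r <;> simp [Matrix.mulVec, dotProduct, Fin.sum_univ_three] <;> field_simp

end Entries

/-- Lopatin's Lemma on rank-two matrices `B` orthogonal to `A = J₂`. -/
theorem lemma_J2_rank_two (K : Type) [Field K] (B : Matrix (Fin 3) (Fin 3) K)
    (hrk : B.rank = 2) (h1 : sigmaC 1 B = 0) (h2 : sigmaC 2 B = 0) (h3 : sigmaC 3 B = 0)
    (htr : Matrix.trace (J2 K * B) = 0) (htr2 : Matrix.trace (J2 K ^ 2 * B ^ 2) = 0) :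
    (∃ t1 t2 t3 : K, B = !![0, t1, t2; 0, 0, t3; 0, 0, 0]) ∨
      (∃ t1 t2 t3 t4 t5 : K,
        (!![t3 * t4, t1, t2; t3, t4, t5; 0, 1, 0] : Matrix (Fin 3) (Fin 3) K).det ≠ 0 ∧
        B = !![t3 * t4, t1, t2; t3, t4, t5; 0, 1, 0] * J2 K *
          (!![t3 * t4, t1, t2; t3, t4, t5; 0, 1, 0])⁻¹) ∨
      (∃ t1 t2 t3 t4 : K,
        (!![t1, t2, t3 * t4; t3, 0, t4; 1, 0, 0] : Matrix (Fin 3) (Fin 3) K).det ≠ 0 ∧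
        B = !![t1, t2, t3 * t4; t3, 0, t4; 1, 0, 0] * J2 K *
          (!![t1, t2, t3 * t4; t3, 0, t4; 1, 0, 0])⁻¹) := by
  obtain ⟨a, b, c, d, e, f, g, h, i, rfl⟩ : ∃ a b c d e f g h i : K,
      B = !![a, b, c; d, e, f; g, h, i] := ⟨_, _, _, _, _, _, _, _, _, B.eta_fin_three⟩
  have hN : !![a, b, c; d, e, f; g, h, i] ^ 3 = 0 :=
    pow_eq_zero_of_sigmaC_eq_zero _ fun k hk1 hk3 => by interval_cases k <;> assumption
  have htrace : a + e + i = 0 := by simpa [sigmaC_one_eq_trace, Matrix.trace_fin_three] using h1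
  have hdh : d + h = 0 := by simpa [trace_J2_mul] using htr
  have h20 : g * a + h * d + i * g = 0 := by
    rw [trace_J2_sq_mul] at htr2
    simpa [sq, Matrix.mul_apply, Fin.sum_univ_three, add_assoc] using htr2
  by_cases hg : g = 0
  · subst hg
    have hh : h = 0 := pow_eq_zero_iff two_ne_zero |>.mp (by linear_combination h * hdh - h20)
    obtain rfl : d = 0 := by linear_combination hdh - hh
    subst hh
    obtain ⟨rfl, rfl, rfl⟩ := upper_diag_eq_zero_of_pow_three_eq_zero hN
    exact Or.inl ⟨b, c, f, rfl⟩
  by_cases hQ : d * a + e * d + f * g = 0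
  · exact Or.inr (Or.inr (exists_conj_J2_form₃ hN hrk htrace hdh h20 hg hQ))
  · exact Or.inr (Or.inl (exists_conj_J2_form₂ hN hdh h20 hg hQ))
end
end

section
/- Let K be a field, A = J_1, and B ∈ M_3(K) with σ_1(B) = σ_2(B) = σ_3(B) = 0, tr(AB) = 0 and rank(B) = 1. Then AB = 0 or BA = 0. -/
open Matrix

noncomputable section

/-- If `A = J₁`, `σ_k(B) = 0`, `tr(AB) = 0` and `rank B = 1`, then `AB = 0` or `BA = 0`. -/
theorem lemma_J1_rank_one (K : Type) [Field K] (B : Matrix (Fin 3) (Fin 3) K)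
    (h1 : sigmaC 1 B = 0) (h2 : sigmaC 2 B = 0) (h3 : sigmaC 3 B = 0)
    (htr : Matrix.trace (J1 K * B) = 0) (hrk : B.rank = 1) :
    J1 K * B = 0 ∨ B * J1 K = 0 := by
  -- rank one ⇒ B i j = c j * v i
  obtain ⟨v, hv0, hv⟩ :=
    (finrank_eq_one_iff' (K := K) (V := LinearMap.range B.mulVecLin)).mp hrk
  have hcol : ∀ j : Fin 3, ∃ c : K, ∀ i, B i j = c * (v : Fin 3 → K) i := by
    intro j
    have hmem : B.mulVec (Pi.single j 1) ∈ LinearMap.range B.mulVecLin :=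
      ⟨Pi.single j 1, rfl⟩
    obtain ⟨c, hc⟩ := hv ⟨_, hmem⟩
    refine ⟨c, fun i => ?_⟩
    have := congrArg (fun w : LinearMap.range B.mulVecLin => (w : Fin 3 → K) i) hc
    simpa [Matrix.mulVec_single, mul_comm] using this.symm
  choose c hc using hcol
  -- trace condition gives B 1 0 = 0
  have hB10 : B 1 0 = 0 := by
    have : Matrix.trace (J1 K * B) = B 1 0 := by
      simp [Matrix.trace, Matrix.mul_apply, J1, Fin.sum_univ_three, Matrix.vecMul, dotProduct,
        Matrix.cons_val_zero, Matrix.cons_val_one, Matrix.head_cons,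
        Matrix.vecHead, Matrix.vecTail]
    rw [this] at htr; exact htr
  have : c 0 * (v : Fin 3 → K) 1 = 0 := by rw [← hc 0 1]; exact hB10
  rcases mul_eq_zero.mp this with h | h
  · -- column 0 of B is zero ⇒ B * J1 = 0
    right
    ext i j
    have hcol0 : ∀ i, B i 0 = 0 := fun i => by rw [hc 0 i, h, zero_mul]
    fin_cases i <;> fin_cases j <;>
      simp [Matrix.mul_apply, J1, Fin.sum_univ_three, hcol0,
        Matrix.cons_val_zero, Matrix.cons_val_one, Matrix.head_cons,
        Matrix.vecHead, Matrix.vecTail]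
  · -- row 1 of B is zero ⇒ J1 * B = 0
    left
    ext i j
    have hrow1 : ∀ j, B 1 j = 0 := fun j => by rw [hc j 1, h, mul_zero]
    fin_cases i <;> fin_cases j <;>
      simp [Matrix.mul_apply, J1, Fin.sum_univ_three, hrow1,
        Matrix.cons_val_zero, Matrix.cons_val_one, Matrix.head_cons,
        Matrix.vecHead, Matrix.vecTail]
end
end

section
/- Let K be a field and A, B ∈ M_3(K) with rank(A) = 2, σ_k(A) = σ_k(B) = 0 for k = 1,2,3, and tr(AB) = tr(A²B²) = tr(A²B) = 0. Then tr(AB²) = 0. If moreover A = J_2, then B is a strictly upper triangular matrix. -/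
open Matrix

noncomputable section

namespace TeranishiAux

open Polynomial

variable {K : Type} [Field K]

lemma charpoly_eq_X_pow_aux (M : Matrix (Fin 3) (Fin 3) K)
    (h0 : M.charpoly.coeff 0 = 0) (h1 : M.charpoly.coeff 1 = 0)
    (h2 : M.charpoly.coeff 2 = 0) : M.charpoly = X ^ 3 := by
  have hdeg : M.charpoly.natDegree = 3 := by simp
  have hmon := M.charpoly_monic
  ext n
  match n with
  | 0 => simpa using h0
  | 1 => simpa using h1
  | 2 => simpa using h2
  | 3 =>
    have := hmon.coeff_natDegree
    rw [hdeg] at this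
    simpa [Polynomial.coeff_X_pow] using this
  | (n+4) =>
    rw [Polynomial.coeff_X_pow]
    have h : M.charpoly.natDegree < n+4 := by omega
    simp [Polynomial.coeff_eq_zero_of_natDegree_lt h]

lemma cube_eq_zero_aux (M : Matrix (Fin 3) (Fin 3) K) (hM : M.charpoly = X ^ 3) :
    M * M * M = 0 := by
  have h := M.aeval_self_charpoly
  rw [hM] at h
  simpa [pow_succ, Matrix.mul_assoc] using h

lemma conj_mul_aux {P Q X Y : Matrix (Fin 3) (Fin 3) K} (h : P * Q = 1) :
    (Q * X * P) * (Q * Y * P) = Q * (X * Y) * P := by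
  simp only [Matrix.mul_assoc]
  rw [← Matrix.mul_assoc P Q, h, Matrix.one_mul]

lemma trace_conj_aux {P Q X : Matrix (Fin 3) (Fin 3) K} (h : P * Q = 1) :
    Matrix.trace (Q * X * P) = Matrix.trace X := by
  rw [Matrix.trace_mul_comm, ← Matrix.mul_assoc, h, Matrix.one_mul]

lemma traceJB (B : Matrix (Fin 3) (Fin 3) K) :
    Matrix.trace (J2 K * B) = B 1 0 + B 2 1 := by
  simp [J2, Matrix.trace_fin_three, Matrix.mul_apply, Fin.sum_univ_three,
    Matrix.vecMul, dotProduct, Matrix.vecHead, Matrix.vecTail]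

lemma traceJJB (B : Matrix (Fin 3) (Fin 3) K) :
    Matrix.trace (J2 K * J2 K * B) = B 2 0 := by
  simp [J2, Matrix.trace_fin_three, Matrix.mul_apply, Fin.sum_univ_three,
    Matrix.vecMul, dotProduct, Matrix.vecHead, Matrix.vecTail]

lemma traceJJBB (B : Matrix (Fin 3) (Fin 3) K) :
    Matrix.trace (J2 K * J2 K * (B * B)) =
      B 2 0 * B 0 0 + B 2 1 * B 1 0 + B 2 2 * B 2 0 := by
  simp [J2, Matrix.trace_fin_three, Matrix.mul_apply, Fin.sum_univ_three,
    Matrix.vecMul, dotProduct, Matrix.vecHead, Matrix.vecTail]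

lemma traceJBB (B : Matrix (Fin 3) (Fin 3) K) :
    Matrix.trace (J2 K * (B * B)) =
      (B 1 0 * B 0 0 + B 1 1 * B 1 0 + B 1 2 * B 2 0)
      + (B 2 0 * B 0 1 + B 2 1 * B 1 1 + B 2 2 * B 2 1) := by
  simp [J2, Matrix.trace_fin_three, Matrix.mul_apply, Fin.sum_univ_three,
    Matrix.vecMul, dotProduct, Matrix.vecHead, Matrix.vecTail]

lemma strictUpper_aux (B : Matrix (Fin 3) (Fin 3) K) (hc : B * B * B = 0)
    (e1 : Matrix.trace (J2 K * B) = 0)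
    (e2 : Matrix.trace (J2 K * J2 K * (B * B)) = 0)
    (e3 : Matrix.trace (J2 K * J2 K * B) = 0) :
    ∀ i j : Fin 3, j ≤ i → B i j = 0 := by
  rw [traceJB] at e1
  rw [traceJJBB] at e2
  rw [traceJJB] at e3
  have h20 : B 2 0 = 0 := e3
  have h21 : B 2 1 = 0 := by
    have h : B 2 1 * B 2 1 = 0 := by
      linear_combination B 2 1 * e1 - e2 + (B 0 0 + B 2 2) * h20
    exact mul_self_eq_zero.mp h
  have h10 : B 1 0 = 0 := by linear_combination e1 - h21
  have h00 : B 0 0 = 0 := by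
    have d : (B * B * B) 0 0 = 0 := by rw [hc]; simp
    simpa [Matrix.mul_apply, Fin.sum_univ_three, h10, h20, h21] using d
  have h11 : B 1 1 = 0 := by
    have d : (B * B * B) 1 1 = 0 := by rw [hc]; simp
    simpa [Matrix.mul_apply, Fin.sum_univ_three, h10, h20, h21] using d
  have h22 : B 2 2 = 0 := by
    have d : (B * B * B) 2 2 = 0 := by rw [hc]; simp
    simpa [Matrix.mul_apply, Fin.sum_univ_three, h10, h20, h21] using d
  intro i j hij
  fin_cases i <;> fin_cases j <;>
    first
      | exact h00 | exact h11 | exact h22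
      | exact h10 | exact h20 | exact h21
      | exact absurd hij (by decide)

lemma upper_traceJBB (B : Matrix (Fin 3) (Fin 3) K)
    (h : ∀ i j : Fin 3, j ≤ i → B i j = 0) :
    Matrix.trace (J2 K * (B * B)) = 0 := by
  rw [traceJBB, h 1 0 (by decide), h 2 0 (by decide), h 2 1 (by decide),
    h 1 1 (by decide), h 2 2 (by decide)]
  ring

end TeranishiAux

open TeranishiAux Polynomial in
/-- Teranishi's Lemma: if `rank A = 2`, `σ_k(A) = σ_k(B) = 0` for `k = 1,2,3`, and
`tr(AB) = tr(A²B²) = tr(A²B) = 0`, then `tr(AB²) = 0`; if moreover `A = J₂`, then `B` is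
strictly upper triangular. -/
theorem lemma_teranishi (K : Type) [Field K] (A B : Matrix (Fin 3) (Fin 3) K)
    (hrk : A.rank = 2)
    (hA1 : sigmaC 1 A = 0) (hA2 : sigmaC 2 A = 0) (hA3 : sigmaC 3 A = 0)
    (hB1 : sigmaC 1 B = 0) (hB2 : sigmaC 2 B = 0) (hB3 : sigmaC 3 B = 0)
    (h1 : Matrix.trace (A * B) = 0) (h2 : Matrix.trace (A ^ 2 * B ^ 2) = 0)
    (h3 : Matrix.trace (A ^ 2 * B) = 0) :
    Matrix.trace (A * B ^ 2) = 0 ∧ (A = J2 K → ∀ i j : Fin 3, j ≤ i → B i j = 0) := by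
  simp only [sigmaC] at hA1 hA2 hA3 hB1 hB2 hB3
  norm_num at hA1 hA2 hA3 hB1 hB2 hB3
  have hcpA : A.charpoly = X ^ 3 := charpoly_eq_X_pow_aux A hA3 hA2 hA1
  have hcpB : B.charpoly = X ^ 3 := charpoly_eq_X_pow_aux B hB3 hB2 hB1
  have hA0 : A * A * A = 0 := cube_eq_zero_aux A hcpA
  have hB0 : B * B * B = 0 := cube_eq_zero_aux B hcpB
  simp only [pow_two] at h2 h3
  constructor
  · -- the trace statement; conjugate A to J₂
    -- A * A ≠ 0
    have hAA : A * A ≠ 0 := by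
      intro h
      have hle : LinearMap.range A.mulVecLin ≤ LinearMap.ker A.mulVecLin := by
        rintro x ⟨y, rfl⟩
        have : (A * A).mulVecLin y = 0 := by rw [h]; simp
        rw [Matrix.mulVecLin_mul] at this
        simpa [LinearMap.mem_ker] using this
      have hsum := LinearMap.finrank_range_add_finrank_ker A.mulVecLin
      have hle' : Module.finrank K (LinearMap.range A.mulVecLin)
          ≤ Module.finrank K (LinearMap.ker A.mulVecLin) := Submodule.finrank_mono hle
      rw [Matrix.rank] at hrk
      have hdim : Module.finrank K (Fin 3 → K) = 3 := by simp
      omega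
    obtain ⟨v, hv⟩ : ∃ v : Fin 3 → K, (A * A).mulVec v ≠ 0 := by
      by_contra h
      push_neg at h
      apply hAA
      ext i j
      have := congrFun (h (Pi.single j 1)) i
      simpa [Matrix.mulVec_single] using this
    set u0 := (A * A).mulVec v with hu0def
    set u1 := A.mulVec v with hu1def
    have hmu0 : A.mulVec u0 = 0 := by
      rw [hu0def, Matrix.mulVec_mulVec, ← Matrix.mul_assoc, hA0]
      simp
    have hmu1 : A.mulVec u1 = u0 := by
      rw [hu1def, Matrix.mulVec_mulVec]
    have hAAu0 : (A * A).mulVec u0 = 0 := by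
      rw [← Matrix.mulVec_mulVec, hmu0, Matrix.mulVec_zero]
    have hAAu1 : (A * A).mulVec u1 = 0 := by
      rw [← Matrix.mulVec_mulVec, hmu1]
      exact hmu0
    set P : Matrix (Fin 3) (Fin 3) K := Matrix.of fun i j => ![u0, u1, v] j i with hPdef
    have hPvec : ∀ c : Fin 3 → K, P.mulVec c = c 0 • u0 + c 1 • u1 + c 2 • v := by
      intro c
      funext i
      simp [hPdef, Matrix.mulVec, dotProduct, Fin.sum_univ_three]
      ring
    have hdet : P.det ≠ 0 := by
      intro hd
      obtain ⟨c, hc0, hc⟩ := (Matrix.exists_mulVec_eq_zero_iff).2 hd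
      rw [hPvec] at hc
      have hc2 : c 2 = 0 := by
        have := congrArg (fun w => (A * A).mulVec w) hc
        simp only [Matrix.mulVec_add, Matrix.mulVec_smul, hAAu0, hAAu1,
          Matrix.mulVec_zero, smul_zero, zero_add, add_zero] at this
        rcases smul_eq_zero.mp this with h | h
        · exact h
        · exact absurd h hv
      have hc1 : c 1 = 0 := by
        have := congrArg (fun w => A.mulVec w) hc
        simp only [Matrix.mulVec_add, Matrix.mulVec_smul, hmu0, hmu1,
          Matrix.mulVec_zero, smul_zero, zero_add, hc2, zero_smul, add_zero] at this
        rcases smul_eq_zero.mp this with h | h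
        · exact h
        · exact absurd h hv
      have hc0' : c 0 = 0 := by
        rw [hc1, hc2] at hc
        simp only [zero_smul, add_zero] at hc
        rcases smul_eq_zero.mp hc with h | h
        · exact h
        · exact absurd h hv
      apply hc0
      funext i
      fin_cases i <;> assumption
    have hPunit : IsUnit P.det := isUnit_iff_ne_zero.mpr hdet
    have hPP : P * P⁻¹ = 1 := Matrix.mul_nonsing_inv P hPunit
    have hPPinv : P⁻¹ * P = 1 := Matrix.nonsing_inv_mul P hPunit
    -- A * P = P * J2
    have m0 : ∀ i, A i 0 * u0 0 + A i 1 * u0 1 + A i 2 * u0 2 = 0 := by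
      intro i
      have := congrFun hmu0 i
      simpa [Matrix.mulVec, dotProduct, Fin.sum_univ_three] using this
    have m1 : ∀ i, A i 0 * u1 0 + A i 1 * u1 1 + A i 2 * u1 2 = u0 i := by
      intro i
      have := congrFun hmu1 i
      simpa [Matrix.mulVec, dotProduct, Fin.sum_univ_three] using this
    have m2 : ∀ i, A i 0 * v 0 + A i 1 * v 1 + A i 2 * v 2 = u1 i := by
      intro i
      have : u1 i = (A.mulVec v) i := by rw [hu1def]
      simp [Matrix.mulVec, dotProduct, Fin.sum_univ_three] at this
      linear_combination -this
    have hAP : A * P = P * J2 K := by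
      ext i j
      fin_cases j <;>
        simp [hPdef, Matrix.mul_apply, Fin.sum_univ_three, J2,
          Matrix.vecHead, Matrix.vecTail]
      · linear_combination m0 i
      · linear_combination m1 i
      · linear_combination m2 i
    have hJ : J2 K = P⁻¹ * A * P := by
      rw [Matrix.mul_assoc, hAP, ← Matrix.mul_assoc, hPPinv, Matrix.one_mul]
    set C : Matrix (Fin 3) (Fin 3) K := P⁻¹ * B * P with hCdef
    have hCC : C * C = P⁻¹ * (B * B) * P := conj_mul_aux hPP
    have hJC : J2 K * C = P⁻¹ * (A * B) * P := by rw [hJ]; exact conj_mul_aux hPP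
    have hJJ : J2 K * J2 K = P⁻¹ * (A * A) * P := by rw [hJ]; exact conj_mul_aux hPP
    have hJJC : J2 K * J2 K * C = P⁻¹ * (A * A * B) * P := by
      rw [hJJ, hCdef]; exact conj_mul_aux hPP
    have hJJCC : J2 K * J2 K * (C * C) = P⁻¹ * (A * A * (B * B)) * P := by
      rw [hJJ, hCC]; exact conj_mul_aux hPP
    have hC3 : C * C * C = 0 := by
      rw [hCC, hCdef]
      rw [conj_mul_aux hPP, hB0]
      simp
    have hCupper : ∀ i j : Fin 3, j ≤ i → C i j = 0 := by
      apply strictUpper_aux C hC3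
      · rw [hJC, trace_conj_aux hPP, h1]
      · rw [hJJCC, trace_conj_aux hPP, h2]
      · rw [hJJC, trace_conj_aux hPP, h3]
    have htr : Matrix.trace (J2 K * (C * C)) = 0 := upper_traceJBB C hCupper
    rw [hJ, hCC] at htr
    rw [conj_mul_aux hPP, trace_conj_aux hPP] at htr
    rw [pow_two, ← Matrix.mul_assoc]
    rwa [← Matrix.mul_assoc] at htr
  · intro hA
    subst hA
    exact strictUpper_aux B hB0 h1 h2 h3
end
end

section
/- Let K be an infinite field. The invariants tr(X_1X_2X_3) and tr(X_1X_3X_2) are linearly independent modulo decomposable invariants in R_{3,3}: if α, β ∈ K and α·tr(X_1X_2X_3) + β·tr(X_1X_3X_2) lies in the ideal (R_{3,3}⁺)², then α = β = 0. -/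
open Matrix MvPolynomial

noncomputable section

/-- Evaluation of a coordinate-ring element at a `d`-tuple of `n × n` matrices. -/
def evalPt {K : Type} [Field K] {n d : ℕ} (A : Fin d → Matrix (Fin n) (Fin n) K) :
    MvPolynomial (Fin d × Fin n × Fin n) K →+* K :=
  MvPolynomial.eval fun p => A p.1 p.2.1 p.2.2

/-- The algebra of invariants `R_{n,d}` of `d`-tuples of `n × n` matrices under
simultaneous conjugation. -/
def invRing (K : Type) [Field K] (n d : ℕ) :
    Subalgebra K (MvPolynomial (Fin d × Fin n × Fin n) K) where
  carrier := {f | ∀ (g : GL (Fin n) K) (A : Fin d → Matrix (Fin n) (Fin n) K),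
      evalPt (fun r => (g : Matrix (Fin n) (Fin n) K) * A r *
        ((↑g⁻¹ : Matrix (Fin n) (Fin n) K))) f = evalPt A f}
  add_mem' := by intro a b ha hb g A; simp only [map_add, ha g A, hb g A]
  mul_mem' := by intro a b ha hb g A; simp only [_root_.map_mul, ha g A, hb g A]
  one_mem' := by intro g A; simp only [_root_.map_one]
  zero_mem' := by intro g A; simp only [map_zero]
  algebraMap_mem' := by intro r g A; simp [evalPt, MvPolynomial.algebraMap_eq]

/-- The generic `n × n` matrices `X_r`. -/
def genMat (K : Type) [Field K] (n d : ℕ) (r : Fin d) :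
    Matrix (Fin n) (Fin n) (MvPolynomial (Fin d × Fin n × Fin n) K) :=
  Matrix.of fun i j => MvPolynomial.X (r, i, j)

/-- The trace of a word in the generic matrices. -/
def trW (K : Type) [Field K] (n d : ℕ) (w : List (Fin d)) :
    MvPolynomial (Fin d × Fin n × Fin n) K :=
  Matrix.trace ((w.map (genMat K n d)).prod)

/-- The set `R⁺` of invariants of positive degree (zero constant term). -/
def plusPart (K : Type) [Field K] (n d : ℕ) : Set (invRing K n d) :=
  {f | MvPolynomial.coeff 0 (f : MvPolynomial (Fin d × Fin n × Fin n) K) = 0}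

/-- The ideal `(R⁺)²` of the invariant ring `R = R_{n,d}`, generated by products of
two positive-degree invariants; its elements are the decomposable invariants. -/
def decIdeal (K : Type) [Field K] (n d : ℕ) : Ideal (invRing K n d) :=
  Ideal.span {x | ∃ a ∈ plusPart K n d, ∃ b ∈ plusPart K n d, x = a * b}

/-!
Conjugating by a diagonal matrix `diag(t)` multiplies `x_{ij}(r)` by `t_i / t_j`; since `K` is
infinite, an invariant is then fixed by this rescaling as a polynomial, so it has no linear term
in an off-diagonal variable. Hence if `M` is a monomial of degree `≤ 3` in off-diagonal variables,
every product `a * b` of positive-degree invariants has zero coefficient at every divisor of `M`: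
in a splitting `m = p + q` one factor has degree `≤ 1`. These coefficient conditions cut out an
ideal, so they hold on all of `(R⁺)²`. But, indexing from `0`, `x₀₁(0) x₁₂(1) x₂₀(2)` occurs in
`tr(X₀X₁X₂)` and not in `tr(X₀X₂X₁)`, while `x₀₁(0) x₁₂(2) x₂₀(1)` does the opposite.
-/

namespace MvPolynomial

variable {σ R : Type*} [CommSemiring R]

lemma coeff_bind₁_C_mul_X (c : σ → R) (m : σ →₀ ℕ) (f : MvPolynomial σ R) :
    coeff m (bind₁ (fun p => C (c p) * X p) f) = (m.prod fun v k => c v ^ k) * coeff m f := by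
  classical
  induction f using induction_on' with
  | add p q hp hq => simp only [map_add, coeff_add, hp, hq, mul_add]
  | monomial u a =>
    have hu : ∏ i ∈ u.support, (C (c i) * X i : MvPolynomial σ R) ^ u i
        = monomial u (u.prod fun v k => c v ^ k) := by
      simp only [mul_pow, Finset.prod_mul_distrib, ← map_pow, ← map_prod, monomial_eq,
        Finsupp.prod]
    rw [bind₁_monomial, hu, C_mul_monomial, coeff_monomial, coeff_monomial]
    split_ifs with h
    · rw [h, mul_comm]
    · rw [mul_zero]

lemma coeff_toFinsupp_X_mul_X_mul_X [DecidableEq σ] (a b c : σ) (s : Multiset σ) :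
    coeff (Multiset.toFinsupp s) (X a * X b * X c : MvPolynomial σ R) =
      if {a, b, c} = s then 1 else 0 := by
  have hmono : (X a * X b * X c : MvPolynomial σ R) =
      monomial (Multiset.toFinsupp {a, b, c}) 1 := by
    simp only [X, monomial_mul, one_mul, Multiset.insert_eq_cons, ← Multiset.singleton_add,
      Multiset.toFinsupp_add, Multiset.toFinsupp_singleton, add_assoc]
  rw [hmono, coeff_monomial]
  exact if_congr Multiset.toFinsupp.injective.eq_iff rfl rfl

lemma mem_span_monomial_not_le_iff {M : σ →₀ ℕ} {p : MvPolynomial σ R} :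
    p ∈ Ideal.span ((fun s => monomial s (1 : R)) '' {s | ¬ s ≤ M}) ↔
      ∀ m ≤ M, coeff m p = 0 := by
  rw [mem_ideal_span_monomial_image]
  constructor
  · intro h m hm
    by_contra hne
    obtain ⟨s, hs, hsm⟩ := h m (mem_support_iff.mpr hne)
    exact hs (hsm.trans hm)
  · intro h m hm
    exact ⟨m, fun hle => mem_support_iff.mp hm (h m hle), le_rfl⟩

lemma coeff_mul_eq_zero_of_degree_le {a b : MvPolynomial σ R} {M : σ →₀ ℕ} {k l : ℕ}
    (hM : M.degree ≤ k + l + 1) (ha : ∀ m ≤ M, m.degree ≤ k → coeff m a = 0)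
    (hb : ∀ m ≤ M, m.degree ≤ l → coeff m b = 0) {m : σ →₀ ℕ} (hm : m ≤ M) :
    coeff m (a * b) = 0 := by
  classical
  rw [coeff_mul]
  refine Finset.sum_eq_zero fun ⟨p, q⟩ hpq => ?_
  rw [Finset.HasAntidiagonal.mem_antidiagonal] at hpq
  subst hpq
  have hdeg : p.degree + q.degree ≤ k + l + 1 := by
    rw [← map_add]
    exact (Finsupp.degree_mono hm).trans hM
  rcases le_or_gt p.degree k with hpk | hpk
  · rw [ha p (le_self_add.trans hm) hpk, zero_mul]
  · rw [hb q (le_add_self.trans hm) (by omega), mul_zero]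

end MvPolynomial

section Invariants

variable {K : Type} [Field K] {n d : ℕ}

lemma trW_three (a b c : Fin d) :
    trW K n d [a, b, c] = ∑ i, ∑ j, ∑ k, X (a, i, j) * X (b, j, k) * X (c, k, i) := by
  simp only [trW, genMat, List.map_cons, List.map_nil, List.prod_cons, List.prod_nil, mul_one,
    trace, diag, mul_apply, of_apply, Finset.mul_sum, mul_assoc]

variable [Infinite K]

lemma bind₁_conj_diagonal_eq_self {f : MvPolynomial (Fin d × Fin n × Fin n) K}
    (hf : f ∈ invRing K n d) (u : (Fin n → K)ˣ) :
    bind₁ (fun p : Fin d × Fin n × Fin n =>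
      C ((u : Fin n → K) p.2.1 * (↑u⁻¹ : Fin n → K) p.2.2) * X p) f = f := by
  refine MvPolynomial.funext fun x => ?_
  have hg := hf (Units.map (diagonalRingHom (Fin n) K).toMonoidHom u)
    (fun r => of fun i j => x (r, i, j))
  unfold evalPt at hg
  rw [eval, eval₂Hom_bind₁]
  change eval (fun p => eval x (C _ * X p)) f = eval x f
  convert hg using 3 with p
  · simp [mul_comm, mul_assoc]
  · rfl

lemma coeff_single_eq_zero_of_mem_invRing {f : MvPolynomial (Fin d × Fin n × Fin n) K}
    (hf : f ∈ invRing K n d) {v : Fin d × Fin n × Fin n} (hv : v.2.1 ≠ v.2.2) :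
    coeff (Finsupp.single v 1) f = 0 := by
  classical
  obtain ⟨c, hc⟩ := Infinite.exists_notMem_finset ({0, 1} : Finset K)
  simp only [Finset.mem_insert, Finset.mem_singleton, not_or] at hc
  have hscale := congrArg (coeff (Finsupp.single v 1)) <| bind₁_conj_diagonal_eq_self hf
    (Units.map (MonoidHom.mulSingle (fun _ => K) v.2.1) (Units.mk0 c hc.1))
  rw [coeff_bind₁_C_mul_X, Finsupp.prod_single_index (by simp)] at hscale
  simp only [Units.coe_map, Units.val_mk0, MonoidHom.mulSingle_apply, Pi.mulSingle_eq_same,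
    Units.val_inv_eq_inv_val, Pi.inv_apply, hv.symm, Pi.mulSingle_eq_of_ne, ne_eq,
    not_false_eq_true, inv_one, mul_one, pow_one] at hscale
  have hfixed : (c - 1) * coeff (Finsupp.single v 1) f = 0 := by
    rw [sub_mul, one_mul, hscale, sub_self]
  exact (mul_eq_zero.mp hfixed).resolve_left (sub_ne_zero.mpr hc.2)

lemma coeff_eq_zero_of_mem_plusPart_of_degree_le_one {a : invRing K n d}
    (ha : a ∈ plusPart K n d) {m : (Fin d × Fin n × Fin n) →₀ ℕ} (hm : m.degree ≤ 1)
    (hoff : ∀ v ∈ m.support, v.2.1 ≠ v.2.2) :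
    coeff m (a : MvPolynomial (Fin d × Fin n × Fin n) K) = 0 := by
  rcases Nat.le_one_iff_eq_zero_or_eq_one.mp hm with h0 | h1
  · rw [(Finsupp.degree_eq_zero_iff m).mp h0]
    exact ha
  · obtain ⟨v, rfl⟩ : m ∈ Set.range (Finsupp.single · 1) := Finsupp.range_single_one ▸ h1
    exact coeff_single_eq_zero_of_mem_invRing a.2 (hoff v (by simp))

lemma coeff_eq_zero_of_mem_decIdeal {M : (Fin d × Fin n × Fin n) →₀ ℕ} (hM : M.degree ≤ 3)
    (hoff : ∀ v ∈ M.support, v.2.1 ≠ v.2.2) {h : invRing K n d} (hh : h ∈ decIdeal K n d) :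
    coeff M (h : MvPolynomial (Fin d × Fin n × Fin n) K) = 0 := by
  suffices decIdeal K n d ≤
      (Ideal.span ((fun s => monomial s (1 : K)) '' {s | ¬ s ≤ M})).comap (invRing K n d).val from
    mem_span_monomial_not_le_iff.mp (this hh) M le_rfl
  refine Ideal.span_le.mpr ?_
  rintro _ ⟨a, ha, b, hb, rfl⟩
  refine mem_span_monomial_not_le_iff.mpr fun m hm =>
    coeff_mul_eq_zero_of_degree_le (k := 1) (l := 1) hM ?_ ?_ hm
  · exact fun m' hm' hdeg => coeff_eq_zero_of_mem_plusPart_of_degree_le_one ha hdeg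
      fun v hv => hoff v (Finsupp.support_mono hm' hv)
  · exact fun m' hm' hdeg => coeff_eq_zero_of_mem_plusPart_of_degree_le_one hb hdeg
      fun v hv => hoff v (Finsupp.support_mono hm' hv)

end Invariants

/-- `tr(X₁X₂X₃)` and `tr(X₁X₃X₂)` are linearly independent modulo decomposable
invariants in `R_{3,3}`. -/
theorem linIndep_tr123 (K : Type) [Field K] [Infinite K] (α β : K)
    (h : ∃ h ∈ decIdeal K 3 3, (h : MvPolynomial (Fin 3 × Fin 3 × Fin 3) K) =
      MvPolynomial.C α * trW K 3 3 [0, 1, 2] + MvPolynomial.C β * trW K 3 3 [0, 2, 1]) :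
    α = 0 ∧ β = 0 := by
  obtain ⟨h, hmem, heq⟩ := h
  have key : ∀ s : Multiset (Fin 3 × Fin 3 × Fin 3), Multiset.card s ≤ 3 →
      (∀ v ∈ s, v.2.1 ≠ v.2.2) →
      α * coeff (Multiset.toFinsupp s) (trW K 3 3 [0, 1, 2]) +
        β * coeff (Multiset.toFinsupp s) (trW K 3 3 [0, 2, 1]) = 0 := by
    intro s hs hoff
    rw [← coeff_C_mul, ← coeff_C_mul, ← coeff_add, ← heq]
    refine coeff_eq_zero_of_mem_decIdeal ((Multiset.toFinsupp_sum_eq s).le.trans hs) ?_ hmem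
    simpa [Multiset.toFinsupp_support] using hoff
  have h₁ := key {(0, 0, 1), (1, 1, 2), (2, 2, 0)} (by decide) (by decide)
  have h₂ := key {(0, 0, 1), (2, 1, 2), (1, 2, 0)} (by decide) (by decide)
  simpa +decide [trW_three, Fin.sum_univ_three, coeff_toFinsupp_X_mul_X_mul_X] using
    And.intro h₁ h₂
end
end

section
/- Let K be an infinite field. The invariants tr(X_1²X_2X_3) and tr(X_1²X_3X_2) are linearly independent modulo decomposable invariants in R_{3,3}: if α, β ∈ K and α·tr(X_1²X_2X_3) + β·tr(X_1²X_3X_2) lies in the ideal (R_{3,3}⁺)², then α = β = 0. -/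
open Matrix MvPolynomial

noncomputable section

/-! Specialise `X_r ↦ t_r A_r` (variables indexed from `0`) at `A = (J, M, E₀₂)`, where `J` is
the lower shift and `M` is conjugate to `E₀₁`. The `t₀²t₁t₂`-coefficient of the image of a product
`ab` of positive-degree invariants is a sum of products of a `d`-coefficient of `a` and an
`e`-coefficient of `b` with `d + e = (2, 1, 1)`, and in each product one factor vanishes: it is a
constant term, or the matrices it involves are weight vectors of nonzero total weight for a
diagonal torus (after conjugating `M` to `E₀₁` when `M` occurs alone), and an invariant has no
nonzero component of nonzero weight. On the other hand `tr(X₁²X₂X₃)` and `tr(X₁²X₃X₂)` contribute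
`M₀₀` and `M₂₂`, and two choices of `M` give `α = 0` and `β = 0`. -/

namespace MatrixInvariants

variable {K : Type} [Field K] {n d : ℕ}

/-- The specialisation `X_r ↦ t_r A_r`: the coefficient of `t ^ δ` in `scaledEval A f` is the
multihomogeneous component of `f` of multidegree `δ`, evaluated at `A`. -/
def scaledEval (A : Fin d → Matrix (Fin n) (Fin n) K) :
    MvPolynomial (Fin d × Fin n × Fin n) K →ₐ[K] MvPolynomial (Fin d) K :=
  aeval fun p => C (A p.1 p.2.1 p.2.2) * X p.1

lemma eval_scaledEval (A : Fin d → Matrix (Fin n) (Fin n) K) (t : Fin d → K)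
    (f : MvPolynomial (Fin d × Fin n × Fin n) K) :
    eval t (scaledEval A f) = evalPt (fun r => t r • A r) f := by
  have : (eval t).comp (scaledEval A : _ →+* MvPolynomial (Fin d) K) =
      evalPt (fun r => t r • A r) :=
    ringHom_ext (fun a => by simp [scaledEval, evalPt])
      (fun p => by simp [scaledEval, evalPt, mul_comm])
  exact RingHom.congr_fun this f

lemma constantCoeff_scaledEval (A : Fin d → Matrix (Fin n) (Fin n) K)
    (f : MvPolynomial (Fin d × Fin n × Fin n) K) :
    constantCoeff (scaledEval A f) = constantCoeff f := by
  have : (constantCoeff : MvPolynomial (Fin d) K →+* K).comp (scaledEval A).toRingHom =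
      constantCoeff :=
    ringHom_ext (fun a => by simp [scaledEval]) (fun p => by simp [scaledEval])
  exact RingHom.congr_fun this f

lemma scaledEval_conj [Infinite K] {f : MvPolynomial (Fin d × Fin n × Fin n) K}
    (hf : f ∈ invRing K n d) (g : GL (Fin n) K) (A : Fin d → Matrix (Fin n) (Fin n) K) :
    scaledEval (fun r => (g : Matrix (Fin n) (Fin n) K) * A r *
      (↑g⁻¹ : Matrix (Fin n) (Fin n) K)) f = scaledEval A f := by
  refine MvPolynomial.funext fun t => ?_
  rw [eval_scaledEval, eval_scaledEval, ← hf g (fun r => t r • A r)]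
  simp only [Matrix.mul_smul, Matrix.smul_mul]

lemma coeff_aeval_C_mul_X {σ : Type*} (c : σ → K) (δ : σ →₀ ℕ) (p : MvPolynomial σ K) :
    coeff δ (aeval (fun r => C (c r) * X r) p) = (δ.prod fun r k => c r ^ k) * coeff δ p := by
  classical
  induction p using MvPolynomial.induction_on' with
  | monomial m a =>
    have : aeval (fun r => C (c r) * X r) (monomial m a)
        = monomial m (a * m.prod fun r k => c r ^ k) := by
      simp only [aeval_monomial, mul_pow, Finsupp.prod_mul, ← map_pow, ← map_finsuppProd,
        algebraMap_eq, ← monomial_eq, C_mul_monomial]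
    rw [this, coeff_monomial, coeff_monomial]
    split_ifs with h
    · rw [h, mul_comm]
    · rw [mul_zero]
  | add p q hp hq => simp only [map_add, coeff_add, hp, hq, mul_add]

lemma coeff_scaledEval_smul (c : Fin d → K) (A : Fin d → Matrix (Fin n) (Fin n) K)
    (δ : Fin d →₀ ℕ) (f : MvPolynomial (Fin d × Fin n × Fin n) K) :
    coeff δ (scaledEval (fun r => c r • A r) f)
      = (δ.prod fun r k => c r ^ k) * coeff δ (scaledEval A f) := by
  have : scaledEval (fun r => c r • A r) = (aeval fun r => C (c r) * X r).comp (scaledEval A) :=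
    MvPolynomial.algHom_ext fun p => by simp [scaledEval]; ring
  rw [this, AlgHom.comp_apply, coeff_aeval_C_mul_X]

lemma exists_zpow_ne_one [Infinite K] {T : ℤ} (hT : T ≠ 0) : ∃ u : Kˣ, u ^ T ≠ 1 := by
  classical
  obtain ⟨x, hx⟩ := Infinite.exists_notMem_finset
    (insert 0 (Polynomial.nthRoots T.natAbs (1 : K)).toFinset)
  rw [Finset.mem_insert, Multiset.mem_toFinset,
    Polynomial.mem_nthRoots (Int.natAbs_pos.2 hT), not_or] at hx
  refine ⟨Units.mk0 x hx.1, fun h => hx.2 ?_⟩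
  rw [← pow_natAbs_eq_one] at h
  simpa using congrArg Units.val h

lemma prod_zpow_pow_eq_zpow_sum {ι G : Type*} [CommGroup G] (s : Finset ι) (u : G)
    (ω : ι → ℤ) (δ : ι → ℕ) : ∏ r ∈ s, (u ^ ω r) ^ δ r = u ^ ∑ r ∈ s, (δ r : ℤ) * ω r := by
  induction s using Finset.cons_induction with
  | empty => simp
  | cons a s ha ih =>
    rw [Finset.prod_cons, Finset.sum_cons, ih, _root_.zpow_add, ← zpow_natCast,
      ← _root_.zpow_mul, mul_comm (ω a)]

def torus (u : Kˣ) (w : Fin n → ℤ) : GL (Fin n) K :=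
  ⟨diagonal fun i => ↑(u ^ w i), diagonal fun i => ↑(u ^ w i)⁻¹,
    by simp only [diagonal_mul_diagonal, Units.mul_inv, diagonal_one],
    by simp only [diagonal_mul_diagonal, Units.inv_mul, diagonal_one]⟩

lemma torus_mul_mul_inv_apply (u : Kˣ) (w : Fin n → ℤ) (M : Matrix (Fin n) (Fin n) K)
    (i j : Fin n) :
    ((torus u w : Matrix (Fin n) (Fin n) K) * M * (↑(torus u w)⁻¹ : Matrix (Fin n) (Fin n) K)) i j
      = ↑(u ^ (w i - w j)) * M i j := by
  simp [torus, diagonal_mul, mul_diagonal, _root_.zpow_sub, mul_right_comm]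

lemma torus_conj_eq_smul (u : Kˣ) {w : Fin n → ℤ} {ω : ℤ} {M : Matrix (Fin n) (Fin n) K}
    (hM : ∀ i j, M i j ≠ 0 → w i - w j = ω) :
    (torus u w : Matrix (Fin n) (Fin n) K) * M * (↑(torus u w)⁻¹ : Matrix (Fin n) (Fin n) K)
      = ((u ^ ω : Kˣ) : K) • M := by
  ext i j
  rw [torus_mul_mul_inv_apply, Matrix.smul_apply, smul_eq_mul]
  by_cases h : M i j = 0
  · rw [h, mul_zero, mul_zero]
  · rw [hM i j h]

/-- Conjugating by `diag (u ^ w i)` multiplies the `δ`-component at `A` by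
`u ^ ∑ r, δ r * ω r`, and `u` can be chosen with this power `≠ 1`. -/
theorem coeff_scaledEval_eq_zero_of_weight [Infinite K]
    {f : MvPolynomial (Fin d × Fin n × Fin n) K} (hf : f ∈ invRing K n d)
    {A : Fin d → Matrix (Fin n) (Fin n) K} {δ : Fin d →₀ ℕ} (w : Fin n → ℤ) (ω : Fin d → ℤ)
    (hA : ∀ r, δ r ≠ 0 → ∀ i j, A r i j ≠ 0 → w i - w j = ω r)
    (hδ : ∑ r, (δ r : ℤ) * ω r ≠ 0) :
    coeff δ (scaledEval A f) = 0 := by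
  obtain ⟨u, hu⟩ := exists_zpow_ne_one (K := K) hδ
  -- the `A r` with `δ r = 0` do not enter the `δ`-coefficient; zeroing them makes every
  -- matrix a weight vector
  let c : Fin d → K := fun r => if δ r = 0 then 0 else 1
  have hA' : coeff δ (scaledEval (fun r => c r • A r) f) = coeff δ (scaledEval A f) := by
    rw [coeff_scaledEval_smul, Finsupp.prod, Finset.prod_eq_one, one_mul]
    intro r hr
    simp [c, Finsupp.mem_support_iff.1 hr]
  have hconj : ∀ r, (torus u w : Matrix (Fin n) (Fin n) K) * (c r • A r)
      * (↑(torus u w)⁻¹ : Matrix (Fin n) (Fin n) K) = ((u ^ ω r : Kˣ) : K) • (c r • A r) := by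
    refine fun r => torus_conj_eq_smul u fun i j h => hA r ?_ i j ?_
    · intro hr
      simp [c, hr] at h
    · intro hr
      simp [hr] at h
  have hweight : (δ.prod fun r k => ((u ^ ω r : Kˣ) : K) ^ k) = ↑(u ^ ∑ r, (δ r : ℤ) * ω r) := by
    rw [Finsupp.prod_fintype _ _ fun r => pow_zero _, ← prod_zpow_pow_eq_zpow_sum, Units.coe_prod]
    simp only [Units.val_pow_eq_pow_val]
  have key := coeff_scaledEval_smul (fun r => ((u ^ ω r : Kˣ) : K)) (fun r => c r • A r) δ f
  rw [← funext hconj, scaledEval_conj hf, hweight, hA'] at key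
  exact (mul_left_eq_self₀.1 key.symm).resolve_left (Units.val_eq_one.not.2 hu)

lemma map_genMat_prod (A : Fin d → Matrix (Fin n) (Fin n) K) (w : List (Fin d)) :
    ((w.map (genMat K n d)).prod).map (scaledEval A)
      = (w.map (X : Fin d → MvPolynomial (Fin d) K)).prod • ((w.map A).prod).map C := by
  induction w with
  | nil =>
    simp only [List.map_nil, List.prod_nil, one_smul]
    rw [Matrix.map_one _ (map_zero _) (map_one _), Matrix.map_one _ (map_zero _) (map_one _)]
  | cons r w ih =>
    have hr : (genMat K n d r).map (scaledEval A)
        = (X r : MvPolynomial (Fin d) K) • (A r).map C := by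
      ext i j
      simp [genMat, scaledEval, mul_comm]
    simp only [List.map_cons, List.prod_cons, Matrix.map_mul, ih, hr, smul_mul_smul_comm]

lemma scaledEval_trW (A : Fin d → Matrix (Fin n) (Fin n) K) (w : List (Fin d)) :
    scaledEval A (trW K n d w) = C (trace (w.map A).prod) * (w.map X).prod := by
  rw [trW, AddMonoidHom.map_trace, map_genMat_prod, trace_smul, ← AddMonoidHom.map_trace,
    smul_eq_mul, mul_comm]

lemma prod_map_X_eq_monomial {σ : Type*} [DecidableEq σ] (w : List σ) :
    (w.map X).prod = monomial (Multiset.toFinsupp (w : Multiset σ)) (1 : K) := by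
  induction w with
  | nil => simp
  | cons r w ih =>
    rw [List.map_cons, List.prod_cons, ih, ← Multiset.cons_coe, ← Multiset.singleton_add,
      Multiset.toFinsupp_add, Multiset.toFinsupp_singleton, X, monomial_mul, one_mul]

lemma coeff_scaledEval_trW (A : Fin d → Matrix (Fin n) (Fin n) K) (w : List (Fin d)) :
    coeff (Multiset.toFinsupp (w : Multiset (Fin d))) (scaledEval A (trW K n d w))
      = trace (w.map A).prod := by
  rw [scaledEval_trW, prod_map_X_eq_monomial, coeff_C_mul, coeff_monomial, if_pos rfl, mul_one]

lemma mul_mem_plusPart (r : invRing K n d) {a : invRing K n d} (ha : a ∈ plusPart K n d) :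
    r * a ∈ plusPart K n d := by
  have ha' : constantCoeff (a : MvPolynomial (Fin d × Fin n × Fin n) K) = 0 := ha
  change constantCoeff ((r : MvPolynomial (Fin d × Fin n × Fin n) K) *
    (a : MvPolynomial (Fin d × Fin n × Fin n) K)) = 0
  rw [map_mul, ha', mul_zero]

lemma map_eq_zero_of_mem_decIdeal (ℓ : MvPolynomial (Fin d × Fin n × Fin n) K →+ K)
    (hℓ : ∀ a ∈ plusPart K n d, ∀ b ∈ plusPart K n d, ℓ ↑(a * b) = 0)
    {h : invRing K n d} (hh : h ∈ decIdeal K n d) : ℓ h = 0 := by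
  suffices ∀ r : invRing K n d, ℓ ↑(r * h) = 0 by simpa using this 1
  induction hh using Submodule.span_induction with
  | mem x hx =>
    obtain ⟨a, ha, b, hb, rfl⟩ := hx
    exact fun r => by rw [← mul_assoc]; exact hℓ _ (mul_mem_plusPart r ha) b hb
  | zero => simp
  | add x y _ _ hx hy =>
    exact fun r => by rw [mul_add, Subalgebra.coe_add, map_add, hx, hy, add_zero]
  | smul s x _ hx => exact fun r => by rw [smul_eq_mul, ← mul_assoc]; exact hx _

section ThreeByThree

def lowerShift : Matrix (Fin 3) (Fin 3) K := !![0, 0, 0; 1, 0, 0; 0, 1, 0]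
def e01 : Matrix (Fin 3) (Fin 3) K := !![0, 1, 0; 0, 0, 0; 0, 0, 0]
def e02 : Matrix (Fin 3) (Fin 3) K := !![0, 0, 1; 0, 0, 0; 0, 0, 0]

def testTuple (M : Matrix (Fin 3) (Fin 3) K) : Fin 3 → Matrix (Fin 3) (Fin 3) K :=
  ![lowerShift, M, e02]

def mu : Fin 3 →₀ ℕ := Multiset.toFinsupp (([0, 0, 1, 2] : List (Fin 3)) : Multiset (Fin 3))

/-- Under the torus weights `(0, 1, 2)` the matrices `lowerShift`, `e01`, `e02` have weights
`1, -1, -2`; since `M` is only conjugate to `e01`, the weight argument applies separately to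
`δ 1 = 0` and to `δ 0 = δ 2 = 0`. -/
def VanishingDegree (δ : Fin 3 →₀ ℕ) : Prop :=
  δ = 0 ∨ (δ 1 = 0 ∧ (δ 0 : ℤ) ≠ 2 * δ 2) ∨ (δ 0 = 0 ∧ δ 2 = 0 ∧ δ 1 ≠ 0)

lemma sum_mul_weights (δ : Fin 3 →₀ ℕ) :
    ∑ r, (δ r : ℤ) * ![1, -1, -2] r = δ 0 - δ 1 - 2 * δ 2 := by
  simp only [Fin.sum_univ_three, cons_val]
  ring

lemma vanishingDegree_or_of_add_eq_mu {δ ε : Fin 3 →₀ ℕ} (h : δ + ε = mu) :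
    VanishingDegree δ ∨ VanishingDegree ε := by
  have hmu : ∀ i, δ i + ε i = mu i := fun i => by rw [← h, Finsupp.add_apply]
  have h0 : δ 0 + ε 0 = 2 := by simpa [mu] using hmu 0
  have h1 : δ 1 + ε 1 = 1 := by simpa [mu] using hmu 1
  have h2 : δ 2 + ε 2 = 1 := by simpa [mu] using hmu 2
  have hz : ∀ γ : Fin 3 →₀ ℕ, γ 0 = 0 → γ 1 = 0 → γ 2 = 0 → γ = 0 := fun γ h0 h1 h2 => by
    ext i; fin_cases i <;> assumption
  unfold VanishingDegree
  by_cases hδ : δ 0 = 0 ∧ δ 1 = 0 ∧ δ 2 = 0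
  · exact Or.inl (Or.inl (hz δ hδ.1 hδ.2.1 hδ.2.2))
  by_cases hε : ε 0 = 0 ∧ ε 1 = 0 ∧ ε 2 = 0
  · exact Or.inr (Or.inl (hz ε hε.1 hε.2.1 hε.2.2))
  omega

lemma coeff_mu_scaledEval_trW_0012 (M : Matrix (Fin 3) (Fin 3) K) :
    coeff mu (scaledEval (testTuple M) (trW K 3 3 [0, 0, 1, 2])) = M 0 0 := by
  rw [mu, coeff_scaledEval_trW]
  simp [testTuple, lowerShift, e02, trace, vecMul, dotProduct, Matrix.mul_apply,
    Fin.sum_univ_three]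

lemma coeff_mu_scaledEval_trW_0021 (M : Matrix (Fin 3) (Fin 3) K) :
    coeff mu (scaledEval (testTuple M) (trW K 3 3 [0, 0, 2, 1])) = M 2 2 := by
  rw [show mu = Multiset.toFinsupp (([0, 0, 2, 1] : List (Fin 3)) : Multiset (Fin 3)) by decide,
    coeff_scaledEval_trW]
  simp [testTuple, lowerShift, e02, trace, vecMul, dotProduct, Fin.sum_univ_three]

variable [Infinite K] {f : MvPolynomial (Fin 3 × Fin 3 × Fin 3) K}

lemma coeff_scaledEval_testTuple_of_apply_one_eq_zero (hf : f ∈ invRing K 3 3)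
    (M : Matrix (Fin 3) (Fin 3) K) {δ : Fin 3 →₀ ℕ} (h1 : δ 1 = 0) (h02 : (δ 0 : ℤ) ≠ 2 * δ 2) :
    coeff δ (scaledEval (testTuple M) f) = 0 := by
  refine coeff_scaledEval_eq_zero_of_weight hf (fun i => i) ![1, -1, -2] ?_ ?_
  · intro r hr i j hij
    fin_cases r
    · fin_cases i <;> fin_cases j <;> simp [testTuple, lowerShift] at hij ⊢
    · exact absurd h1 hr
    · fin_cases i <;> fin_cases j <;> simp [testTuple, e02] at hij ⊢
  · rw [sum_mul_weights]
    omega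

lemma coeff_scaledEval_testTuple_of_conj (hf : f ∈ invRing K 3 3)
    {M : Matrix (Fin 3) (Fin 3) K} {g : GL (Fin 3) K}
    (hg : (g : Matrix (Fin 3) (Fin 3) K) * M = e01 * (g : Matrix (Fin 3) (Fin 3) K))
    {δ : Fin 3 →₀ ℕ} (h0 : δ 0 = 0) (h2 : δ 2 = 0) (h1 : δ 1 ≠ 0) :
    coeff δ (scaledEval (testTuple M) f) = 0 := by
  have hM : (g : Matrix (Fin 3) (Fin 3) K) * M * (↑g⁻¹ : Matrix (Fin 3) (Fin 3) K) = e01 := by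
    rw [hg, Matrix.mul_assoc, ← Units.val_mul, mul_inv_cancel, Units.val_one, Matrix.mul_one]
  rw [← scaledEval_conj hf g]
  refine coeff_scaledEval_eq_zero_of_weight hf (fun i => i) ![1, -1, -2] ?_ ?_
  · intro r hr i j hij
    fin_cases r
    · exact absurd h0 hr
    · change ((g : Matrix (Fin 3) (Fin 3) K) * M * (↑g⁻¹ : Matrix (Fin 3) (Fin 3) K)) i j ≠ 0
        at hij
      rw [hM] at hij
      fin_cases i <;> fin_cases j <;> simp [e01] at hij ⊢
    · exact absurd h2 hr
  · rw [sum_mul_weights]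
    omega

lemma coeff_scaledEval_testTuple_eq_zero (hf : f ∈ invRing K 3 3) (hf0 : coeff 0 f = 0)
    {M : Matrix (Fin 3) (Fin 3) K} {g : GL (Fin 3) K}
    (hg : (g : Matrix (Fin 3) (Fin 3) K) * M = e01 * (g : Matrix (Fin 3) (Fin 3) K))
    {δ : Fin 3 →₀ ℕ} (hδ : VanishingDegree δ) :
    coeff δ (scaledEval (testTuple M) f) = 0 := by
  rcases hδ with rfl | ⟨h1, h02⟩ | ⟨h0, h2, h1⟩
  · rw [← constantCoeff_eq, constantCoeff_scaledEval, constantCoeff_eq, hf0]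
  · exact coeff_scaledEval_testTuple_of_apply_one_eq_zero hf M h1 h02
  · exact coeff_scaledEval_testTuple_of_conj hf hg h0 h2 h1

lemma coeff_mu_scaledEval_testTuple_mul {M : Matrix (Fin 3) (Fin 3) K} {g : GL (Fin 3) K}
    (hg : (g : Matrix (Fin 3) (Fin 3) K) * M = e01 * (g : Matrix (Fin 3) (Fin 3) K))
    {a b : invRing K 3 3} (ha : a ∈ plusPart K 3 3) (hb : b ∈ plusPart K 3 3) :
    coeff mu (scaledEval (testTuple M) ↑(a * b)) = 0 := by
  rw [Subalgebra.coe_mul, map_mul, coeff_mul]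
  refine Finset.sum_eq_zero fun p hp => ?_
  rcases vanishingDegree_or_of_add_eq_mu (Finset.HasAntidiagonal.mem_antidiagonal.1 hp) with h | h
  · rw [coeff_scaledEval_testTuple_eq_zero a.2 ha hg h, zero_mul]
  · rw [coeff_scaledEval_testTuple_eq_zero b.2 hb hg h, mul_zero]

lemma mul_add_mul_eq_zero_of_mem_decIdeal {α β : K} {h : invRing K 3 3}
    (hmem : h ∈ decIdeal K 3 3)
    (hrepr : (h : MvPolynomial (Fin 3 × Fin 3 × Fin 3) K) =
      C α * trW K 3 3 [0, 0, 1, 2] + C β * trW K 3 3 [0, 0, 2, 1])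
    {M : Matrix (Fin 3) (Fin 3) K} {g : GL (Fin 3) K}
    (hg : (g : Matrix (Fin 3) (Fin 3) K) * M = e01 * (g : Matrix (Fin 3) (Fin 3) K)) :
    α * M 0 0 + β * M 2 2 = 0 := by
  have hvanish := map_eq_zero_of_mem_decIdeal
    ((coeffAddMonoidHom mu).comp (scaledEval (testTuple M)).toRingHom.toAddMonoidHom)
    (fun a ha b hb => coeff_mu_scaledEval_testTuple_mul hg ha hb) hmem
  change coeff mu (scaledEval (testTuple M) h) = 0 at hvanish
  rwa [hrepr, C_mul', C_mul', map_add, map_smul, map_smul, coeff_add, coeff_smul, coeff_smul,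
    coeff_mu_scaledEval_trW_0012, coeff_mu_scaledEval_trW_0021, smul_eq_mul, smul_eq_mul]
    at hvanish

end ThreeByThree

end MatrixInvariants

open MatrixInvariants

/-- `tr(X₁²X₂X₃)` and `tr(X₁²X₃X₂)` are linearly independent modulo decomposable
invariants in `R_{3,3}`. -/
theorem linIndep_tr1123 (K : Type) [Field K] [Infinite K] (α β : K)
    (h : ∃ h ∈ decIdeal K 3 3, (h : MvPolynomial (Fin 3 × Fin 3 × Fin 3) K) =
      MvPolynomial.C α * trW K 3 3 [0, 0, 1, 2] + MvPolynomial.C β * trW K 3 3 [0, 0, 2, 1]) :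
    α = 0 ∧ β = 0 := by
  obtain ⟨h, hmem, hrepr⟩ := h
  -- `M = v wᵀ` with `w ⬝ᵥ v = 0`; `g` has row `1` equal to `w` and `g v = e₀`, so `g M = e01 g`
  have hα := mul_add_mul_eq_zero_of_mem_decIdeal hmem hrepr
    (M := !![1, -1, 0; 1, -1, 0; 0, 0, 0])
    (g := GeneralLinearGroup.mkOfDetNeZero !![1, 0, 0; 1, -1, 0; 0, 0, 1]
      (by simp [det_fin_three]))
    (by simp [e01])
  have hβ := mul_add_mul_eq_zero_of_mem_decIdeal hmem hrepr
    (M := !![0, 0, 0; 0, -1, 1; 0, -1, 1])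
    (g := GeneralLinearGroup.mkOfDetNeZero !![0, 1, 0; 0, -1, 1; 1, 0, 0]
      (by simp [det_fin_three]))
    (by simp [e01])
  exact ⟨by simpa using hα, by simpa using hβ⟩
end
end

section
/- Let K be an infinite field of characteristic different from 3. Then the invariants tr(X_1²X_2²X_3²) and tr(X_1²X_3²X_2²) are linearly dependent modulo decomposable invariants in R_{3,3}; in fact, the sum tr(X_1²X_2²X_3²) + tr(X_1²X_3²X_2²) lies in the ideal (R_{3,3}⁺)². -/
open Matrix MvPolynomial

noncomputable section

----------------------------------------------------------------------------

variable {K : Type} [Field K] {n d : ℕ}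

lemma gl_mul_inv (g : GL (Fin n) K) :
    (g : Matrix (Fin n) (Fin n) K) * (↑g⁻¹ : Matrix (Fin n) (Fin n) K) = 1 := by
  exact_mod_cast g.mul_inv

lemma gl_inv_mul (g : GL (Fin n) K) :
    (↑g⁻¹ : Matrix (Fin n) (Fin n) K) * (g : Matrix (Fin n) (Fin n) K) = 1 := by
  exact_mod_cast g.inv_mul

lemma genMat_map (A : Fin d → Matrix (Fin n) (Fin n) K) (r : Fin d) :
    (genMat K n d r).map (evalPt A) = A r := by
  ext i j
  simp [genMat, evalPt, Matrix.map_apply]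

lemma evalPt_word (A : Fin d → Matrix (Fin n) (Fin n) K) (w : List (Fin d)) :
    ((w.map (genMat K n d)).prod).map (evalPt A) = (w.map A).prod := by
  induction w with
  | nil => simp [Matrix.map_one]
  | cons r t ih =>
      simp only [List.map_cons, List.prod_cons, Matrix.map_mul, ih, genMat_map]

lemma evalPt_trace (A : Fin d → Matrix (Fin n) (Fin n) K)
    (M : Matrix (Fin n) (Fin n) (MvPolynomial (Fin d × Fin n × Fin n) K)) :
    evalPt A (Matrix.trace M) = Matrix.trace (M.map (evalPt A)) := by
  simp [Matrix.trace, Matrix.diag, map_sum, Matrix.map_apply]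

lemma evalPt_trW (A : Fin d → Matrix (Fin n) (Fin n) K) (w : List (Fin d)) :
    evalPt A (trW K n d w) = Matrix.trace ((w.map A).prod) := by
  rw [trW, evalPt_trace, evalPt_word]

lemma word_conj (g : GL (Fin n) K) (A : Fin d → Matrix (Fin n) (Fin n) K) (w : List (Fin d)) :
    (w.map (fun r => (g : Matrix (Fin n) (Fin n) K) * A r *
        (↑g⁻¹ : Matrix (Fin n) (Fin n) K))).prod
      = (g : Matrix (Fin n) (Fin n) K) * (w.map A).prod *
        (↑g⁻¹ : Matrix (Fin n) (Fin n) K) := by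
  induction w with
  | nil => simp only [List.map_nil, List.prod_nil, mul_one, gl_mul_inv]
  | cons r t ih =>
      simp only [List.map_cons, List.prod_cons, ih, ← mul_assoc]
      rw [mul_assoc ((g : Matrix (Fin n) (Fin n) K) * A r) _ (g : Matrix (Fin n) (Fin n) K),
        gl_inv_mul, mul_one]

lemma traceConj (g : GL (Fin n) K) (P : Matrix (Fin n) (Fin n) K) :
    Matrix.trace ((g : Matrix (Fin n) (Fin n) K) * P * (↑g⁻¹ : Matrix (Fin n) (Fin n) K))
      = Matrix.trace P := by
  rw [Matrix.trace_mul_comm, ← Matrix.mul_assoc, gl_inv_mul, Matrix.one_mul]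

lemma trW_mem (w : List (Fin d)) : trW K n d w ∈ invRing K n d := by
  intro g A
  rw [evalPt_trW, evalPt_trW, word_conj, traceConj]

-- second coefficient σ₂ of a 3×3 matrix, explicitly
def s2 {R : Type} [CommRing R] (M : Matrix (Fin 3) (Fin 3) R) : R :=
  M 0 0 * M 1 1 - M 0 1 * M 1 0 + (M 0 0 * M 2 2 - M 0 2 * M 2 0) +
    (M 1 1 * M 2 2 - M 1 2 * M 2 1)

lemma s2_eq_trace_adjugate {R : Type} [CommRing R] (M : Matrix (Fin 3) (Fin 3) R) :
    s2 M = Matrix.trace (Matrix.adjugate M) := by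
  rw [Matrix.adjugate_fin_three, Matrix.trace_fin_three]
  simp only [Matrix.of_apply, Matrix.cons_val', Matrix.cons_val_zero, Matrix.empty_val',
    Matrix.cons_val_fin_one, Matrix.cons_val_one, Matrix.head_cons, Matrix.head_fin_const,
    Matrix.cons_val_two, Matrix.tail_cons, Matrix.head_fin_const, s2]
  ring

lemma s2_map {R S : Type} [CommRing R] [CommRing S] (f : R →+* S)
    (M : Matrix (Fin 3) (Fin 3) R) : s2 (M.map f) = f (s2 M) := by
  simp [s2, Matrix.map_apply]

lemma s2_conj (g : GL (Fin 3) K) (M : Matrix (Fin 3) (Fin 3) K) :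
    s2 ((g : Matrix (Fin 3) (Fin 3) K) * M * (↑g⁻¹ : Matrix (Fin 3) (Fin 3) K)) = s2 M := by
  rw [s2_eq_trace_adjugate, s2_eq_trace_adjugate, Matrix.adjugate_mul_distrib,
    Matrix.adjugate_mul_distrib, Matrix.trace_mul_comm, Matrix.mul_assoc,
    ← Matrix.adjugate_mul_distrib, gl_inv_mul, Matrix.adjugate_one, Matrix.mul_one]

def sW (K : Type) [Field K] (w : List (Fin 3)) : MvPolynomial (Fin 3 × Fin 3 × Fin 3) K :=
  s2 ((w.map (genMat K 3 3)).prod)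

lemma evalPt_sW (A : Fin 3 → Matrix (Fin 3) (Fin 3) K) (w : List (Fin 3)) :
    evalPt A (sW K w) = s2 ((w.map A).prod) := by
  rw [sW, ← evalPt_word A w, s2_map]

lemma sW_mem (w : List (Fin 3)) : sW K w ∈ invRing K 3 3 := by
  intro g A
  rw [evalPt_sW, evalPt_sW, word_conj, s2_conj]

-- constant coefficients
lemma coeff0_eq_evalPt_zero (f : MvPolynomial (Fin d × Fin n × Fin n) K) :
    MvPolynomial.coeff 0 f = evalPt (fun _ => (0 : Matrix (Fin n) (Fin n) K)) f := by
  rw [show evalPt (fun _ => (0 : Matrix (Fin n) (Fin n) K)) f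
      = MvPolynomial.eval (0 : (Fin d × Fin n × Fin n) → K) f from rfl,
    MvPolynomial.eval_zero, MvPolynomial.constantCoeff_eq]

lemma trW_coeff0 (r : Fin d) (t : List (Fin d)) :
    MvPolynomial.coeff 0 (trW K n d (r :: t)) = 0 := by
  rw [coeff0_eq_evalPt_zero, evalPt_trW]
  simp

lemma sW_coeff0 (r : Fin 3) (t : List (Fin 3)) :
    MvPolynomial.coeff 0 (sW K (r :: t)) = 0 := by
  rw [coeff0_eq_evalPt_zero, evalPt_sW]
  simp [s2]

-- elements of the invariant ring
def tE (K : Type) [Field K] (w : List (Fin 3)) : invRing K 3 3 := ⟨trW K 3 3 w, trW_mem w⟩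

def sE (K : Type) [Field K] (w : List (Fin 3)) : invRing K 3 3 := ⟨sW K w, sW_mem w⟩

lemma tE_plus (r : Fin 3) (t : List (Fin 3)) : tE K (r :: t) ∈ plusPart K 3 3 :=
  trW_coeff0 r t

lemma sE_plus (r : Fin 3) (t : List (Fin 3)) : sE K (r :: t) ∈ plusPart K 3 3 :=
  sW_coeff0 r t

lemma plus_mul {a b : invRing K n d} (ha : a ∈ plusPart K n d) (hb : b ∈ plusPart K n d) :
    a * b ∈ plusPart K n d := by
  simp only [plusPart, Set.mem_setOf_eq, ← MvPolynomial.constantCoeff_eq] at ha hb ⊢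
  rw [show ((a * b : invRing K n d) : MvPolynomial (Fin d × Fin n × Fin n) K)
      = (a : MvPolynomial (Fin d × Fin n × Fin n) K) * b from rfl, _root_.map_mul, ha, hb, mul_zero]

lemma mem_dec {a b : invRing K n d} (ha : a ∈ plusPart K n d) (hb : b ∈ plusPart K n d) :
    a * b ∈ decIdeal K n d :=
  Ideal.subset_span ⟨a, ha, b, hb, rfl⟩

-- the word product and generic Cayley–Hamilton polarization identities

def W (K : Type) [Field K] (w : List (Fin 3)) :
    Matrix (Fin 3) (Fin 3) (MvPolynomial (Fin 3 × Fin 3 × Fin 3) K) :=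
  (w.map (genMat K 3 3)).prod

lemma W_mul {K : Type} [Field K] (u v : List (Fin 3)) : W K u * W K v = W K (u ++ v) := by
  simp [W, List.map_append, List.prod_append]

lemma trWW {K : Type} [Field K] (w : List (Fin 3)) :
    Matrix.trace (W K w) = trW K 3 3 w := rfl

lemma sWW {K : Type} [Field K] (w : List (Fin 3)) : s2 (W K w) = sW K w := rfl

lemma trW_rot {K : Type} [Field K] (u v : List (Fin 3)) :
    trW K 3 3 (u ++ v) = trW K 3 3 (v ++ u) := by
  simp only [trW, List.map_append, List.prod_append]
  exact Matrix.trace_mul_comm _ _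

set_option maxHeartbeats 4000000 in
lemma I4gen {R : Type} [CommRing R] (a b c x : Matrix (Fin 3) (Fin 3) R) :
    Matrix.trace (a*b*c*x) + Matrix.trace (a*c*b*x) + Matrix.trace (b*a*c*x)
      + Matrix.trace (b*c*a*x) + Matrix.trace (c*a*b*x) + Matrix.trace (c*b*a*x)
    = Matrix.trace a * (Matrix.trace (b*c*x) + Matrix.trace (c*b*x))
      + Matrix.trace b * (Matrix.trace (a*c*x) + Matrix.trace (c*a*x))
      + Matrix.trace c * (Matrix.trace (a*b*x) + Matrix.trace (b*a*x))
      - ((Matrix.trace a * Matrix.trace b - Matrix.trace (a*b)) * Matrix.trace (c*x)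
        + (Matrix.trace a * Matrix.trace c - Matrix.trace (a*c)) * Matrix.trace (b*x)
        + (Matrix.trace b * Matrix.trace c - Matrix.trace (b*c)) * Matrix.trace (a*x))
      + (Matrix.trace a * Matrix.trace b * Matrix.trace c
        - Matrix.trace a * Matrix.trace (b*c) - Matrix.trace b * Matrix.trace (a*c)
        - Matrix.trace c * Matrix.trace (a*b)
        + Matrix.trace (a*b*c) + Matrix.trace (a*c*b)) * Matrix.trace x := by
  simp only [Matrix.trace_fin_three, Matrix.mul_apply, Fin.sum_univ_three]
  ring1

set_option maxHeartbeats 4000000 in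
lemma J4gen {R : Type} [CommRing R] (a b x : Matrix (Fin 3) (Fin 3) R) :
    Matrix.trace (a*a*b*x) + Matrix.trace (a*b*a*x) + Matrix.trace (b*a*a*x)
      + s2 a * Matrix.trace (b*x)
      + Matrix.trace a * Matrix.trace b * Matrix.trace (a*x)
      + Matrix.trace a * Matrix.trace (a*b) * Matrix.trace x
    = Matrix.trace a * (Matrix.trace (a*b*x) + Matrix.trace (b*a*x))
      + Matrix.trace b * Matrix.trace (a*a*x)
      + Matrix.trace (a*b) * Matrix.trace (a*x)
      + s2 a * Matrix.trace b * Matrix.trace x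
      + Matrix.trace (a*a*b) * Matrix.trace x := by
  simp only [s2, Matrix.trace_fin_three, Matrix.mul_apply, Fin.sum_univ_three]
  ring1

set_option maxHeartbeats 2000000 in
set_option maxRecDepth 8000 in
def bigS (K : Type) [Field K] : invRing K 3 3 :=
  sE K [0] * (tE K [1] * tE K [1, 2, 2])
      + sE K [0] * (tE K [1] * tE K [1, 2, 2])
      + sE K [0] * (tE K [1] * tE K [1, 2, 2])
      + sE K [0] * (tE K [1] * tE K [1, 2, 2])
      + sE K [0] * (tE K [1] * tE K [1, 2, 2])
      + sE K [0, 1] * (tE K [2] * tE K [2])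
      + sE K [0, 1] * (tE K [2] * tE K [2])
      + sE K [0, 1] * (tE K [2] * tE K [2])
      + sE K [1] * (tE K [0] * tE K [0, 2, 2])
      + sE K [1] * (tE K [0] * tE K [0, 2, 2])
      + sE K [1] * (tE K [0] * tE K [0, 2, 2])
      + sE K [1] * (tE K [0] * tE K [0, 2, 2])
      + sE K [1] * (tE K [0] * tE K [0, 2, 2])
      + sE K [2] * (tE K [0] * tE K [0, 1, 1])
      + tE K [0] * (tE K [0, 1] * (tE K [1, 2] * tE K [2]))
      + tE K [0] * (tE K [0, 1, 1] * tE K [2, 2])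
      + tE K [0] * (tE K [0, 1, 1] * tE K [2, 2])
      + tE K [0] * (tE K [0, 1, 1] * tE K [2, 2])
      + tE K [0] * (tE K [0, 1, 1] * tE K [2, 2])
      + tE K [0] * (tE K [0, 1, 1] * tE K [2, 2])
      + tE K [0] * (tE K [0, 1, 1, 2] * tE K [2])
      + tE K [0] * tE K [0, 1, 1, 2, 2]
      + tE K [0] * tE K [0, 1, 1, 2, 2]
      + tE K [0] * tE K [0, 1, 1, 2, 2]
      + tE K [0] * (tE K [0, 2] * (tE K [1] * tE K [1, 2]))
      + tE K [0] * (tE K [0, 2, 1] * tE K [1, 2])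
      + tE K [0] * tE K [0, 2, 2, 1, 1]
      + tE K [0] * tE K [0, 2, 2, 1, 1]
      + tE K [0, 0, 1] * (tE K [1] * tE K [2, 2])
      + tE K [0, 0, 1] * (tE K [1] * tE K [2, 2])
      + tE K [0, 0, 1] * (tE K [1] * tE K [2, 2])
      + tE K [0, 0, 1] * (tE K [1] * tE K [2, 2])
      + tE K [0, 0, 1] * (tE K [1] * tE K [2, 2])
      + tE K [0, 0, 1] * tE K [1, 2, 2]
      + tE K [0, 0, 1, 2] * (tE K [1] * tE K [2])
      + tE K [0, 0, 1, 2] * (tE K [1] * tE K [2])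
      + tE K [0, 0, 1, 2] * (tE K [1] * tE K [2])
      + tE K [0, 0, 1, 2, 2] * tE K [1]
      + tE K [0, 0, 2] * tE K [1, 1, 2]
      + tE K [0, 0, 2, 1, 1] * tE K [2]
      + tE K [0, 0, 2, 2, 1] * tE K [1]
      + tE K [0, 0, 2, 2, 1] * tE K [1]
      + tE K [0, 0, 2, 2, 1] * tE K [1]
      + tE K [0, 1] * (tE K [0, 1] * tE K [2, 2])
      + tE K [0, 1] * (tE K [0, 1] * tE K [2, 2])
      + tE K [0, 1] * (tE K [0, 1] * tE K [2, 2])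
      + tE K [0, 1] * (tE K [0, 1] * tE K [2, 2])
      + tE K [0, 1] * (tE K [0, 1] * tE K [2, 2])
      + tE K [0, 1] * tE K [0, 2, 1, 2]
      + tE K [0, 1, 0, 1, 2] * tE K [2]
      + tE K [0, 1, 0, 2] * (tE K [1] * tE K [2])
      + tE K [0, 1, 0, 2] * tE K [1, 2]
      + tE K [0, 1, 0, 2, 1] * tE K [2]
      + tE K [0, 1, 0, 2, 1] * tE K [2]
      + tE K [0, 1, 0, 2, 1] * tE K [2]
      + tE K [0, 1, 1] * tE K [0, 2, 2]
      + tE K [0, 1, 2] * (tE K [0, 2] * tE K [1])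
      + tE K [0, 1, 2] * (tE K [0, 2] * tE K [1])
      + tE K [0, 1, 2, 1] * tE K [0, 2]
      - sE K [0] * tE K [1, 1, 2, 2]
      - sE K [0] * tE K [1, 1, 2, 2]
      - sE K [0] * tE K [1, 1, 2, 2]
      - sE K [0] * tE K [1, 1, 2, 2]
      - sE K [0] * tE K [1, 1, 2, 2]
      - sE K [0, 1] * tE K [2, 2]
      - sE K [0, 1] * tE K [2, 2]
      - sE K [0, 1] * tE K [2, 2]
      - sE K [1] * tE K [0, 0, 2, 2]
      - sE K [1] * tE K [0, 0, 2, 2]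
      - sE K [1] * tE K [0, 0, 2, 2]
      - sE K [1] * tE K [0, 0, 2, 2]
      - sE K [1] * tE K [0, 0, 2, 2]
      - sE K [2] * tE K [0, 0, 1, 1]
      - tE K [0] * (tE K [0, 1] * (tE K [1] * tE K [2, 2]))
      - tE K [0] * (tE K [0, 1] * (tE K [1] * tE K [2, 2]))
      - tE K [0] * (tE K [0, 1] * (tE K [1] * tE K [2, 2]))
      - tE K [0] * (tE K [0, 1] * (tE K [1] * tE K [2, 2]))
      - tE K [0] * (tE K [0, 1] * (tE K [1] * tE K [2, 2]))
      - tE K [0] * (tE K [0, 1] * tE K [1, 2, 2])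
      - tE K [0] * (tE K [0, 1, 2] * (tE K [1] * tE K [2]))
      - tE K [0] * (tE K [0, 1, 2] * (tE K [1] * tE K [2]))
      - tE K [0] * (tE K [0, 1, 2] * (tE K [1] * tE K [2]))
      - tE K [0] * (tE K [0, 1, 2, 2] * tE K [1])
      - tE K [0] * (tE K [0, 2] * tE K [1, 1, 2])
      - tE K [0] * tE K [0, 2, 1, 2, 1]
      - tE K [0] * (tE K [0, 2, 2, 1] * tE K [1])
      - tE K [0] * (tE K [0, 2, 2, 1] * tE K [1])
      - tE K [0, 0, 1] * (tE K [1, 2] * tE K [2])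
      - tE K [0, 0, 1, 1] * tE K [2, 2]
      - tE K [0, 0, 1, 1] * tE K [2, 2]
      - tE K [0, 0, 1, 1] * tE K [2, 2]
      - tE K [0, 0, 1, 1] * tE K [2, 2]
      - tE K [0, 0, 1, 1] * tE K [2, 2]
      - tE K [0, 0, 1, 1, 2] * tE K [2]
      - tE K [0, 0, 2] * (tE K [1] * tE K [1, 2])
      - tE K [0, 0, 2, 1] * (tE K [1] * tE K [2])
      - tE K [0, 1] * (tE K [0, 1, 2] * tE K [2])
      - tE K [0, 1] * (tE K [0, 2] * tE K [1, 2])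
      - tE K [0, 1] * (tE K [0, 2] * tE K [1, 2])
      - tE K [0, 1] * (tE K [0, 2, 1] * tE K [2])
      - tE K [0, 1] * (tE K [0, 2, 1] * tE K [2])
      - tE K [0, 1] * (tE K [0, 2, 1] * tE K [2])
      - tE K [0, 1, 0, 1] * tE K [2, 2]
      - tE K [0, 1, 0, 1] * tE K [2, 2]
      - tE K [0, 1, 0, 1] * tE K [2, 2]
      - tE K [0, 1, 0, 1] * tE K [2, 2]
      - tE K [0, 1, 0, 1] * tE K [2, 2]
      - tE K [0, 1, 0, 2, 2] * tE K [1]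
      - tE K [0, 1, 1] * (tE K [0, 2] * tE K [2])
      - tE K [0, 1, 2] * tE K [0, 2, 1]
      - tE K [0, 1, 2, 0, 2] * tE K [1]
      - tE K [0, 1, 2, 0, 2] * tE K [1]

set_option maxHeartbeats 2000000 in
set_option maxRecDepth 8000 in
lemma bigS_mem {K : Type} [Field K] : bigS K ∈ decIdeal K 3 3 := by
  have m0 : sE K [0] * (tE K [1] * tE K [1, 2, 2]) ∈ decIdeal K 3 3 := mem_dec (sE_plus 0 []) (plus_mul (tE_plus 1 []) (tE_plus 1 [2, 2]))
  have m1 : sE K [0, 1] * (tE K [2] * tE K [2]) ∈ decIdeal K 3 3 := mem_dec (sE_plus 0 [1]) (plus_mul (tE_plus 2 []) (tE_plus 2 []))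
  have m2 : sE K [1] * (tE K [0] * tE K [0, 2, 2]) ∈ decIdeal K 3 3 := mem_dec (sE_plus 1 []) (plus_mul (tE_plus 0 []) (tE_plus 0 [2, 2]))
  have m3 : sE K [2] * (tE K [0] * tE K [0, 1, 1]) ∈ decIdeal K 3 3 := mem_dec (sE_plus 2 []) (plus_mul (tE_plus 0 []) (tE_plus 0 [1, 1]))
  have m4 : tE K [0] * (tE K [0, 1] * (tE K [1, 2] * tE K [2])) ∈ decIdeal K 3 3 := mem_dec (tE_plus 0 []) (plus_mul (tE_plus 0 [1]) (plus_mul (tE_plus 1 [2]) (tE_plus 2 [])))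
  have m5 : tE K [0] * (tE K [0, 1, 1] * tE K [2, 2]) ∈ decIdeal K 3 3 := mem_dec (tE_plus 0 []) (plus_mul (tE_plus 0 [1, 1]) (tE_plus 2 [2]))
  have m6 : tE K [0] * (tE K [0, 1, 1, 2] * tE K [2]) ∈ decIdeal K 3 3 := mem_dec (tE_plus 0 []) (plus_mul (tE_plus 0 [1, 1, 2]) (tE_plus 2 []))
  have m7 : tE K [0] * tE K [0, 1, 1, 2, 2] ∈ decIdeal K 3 3 := mem_dec (tE_plus 0 []) (tE_plus 0 [1, 1, 2, 2])
  have m8 : tE K [0] * (tE K [0, 2] * (tE K [1] * tE K [1, 2])) ∈ decIdeal K 3 3 := mem_dec (tE_plus 0 []) (plus_mul (tE_plus 0 [2]) (plus_mul (tE_plus 1 []) (tE_plus 1 [2])))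
  have m9 : tE K [0] * (tE K [0, 2, 1] * tE K [1, 2]) ∈ decIdeal K 3 3 := mem_dec (tE_plus 0 []) (plus_mul (tE_plus 0 [2, 1]) (tE_plus 1 [2]))
  have m10 : tE K [0] * tE K [0, 2, 2, 1, 1] ∈ decIdeal K 3 3 := mem_dec (tE_plus 0 []) (tE_plus 0 [2, 2, 1, 1])
  have m11 : tE K [0, 0, 1] * (tE K [1] * tE K [2, 2]) ∈ decIdeal K 3 3 := mem_dec (tE_plus 0 [0, 1]) (plus_mul (tE_plus 1 []) (tE_plus 2 [2]))
  have m12 : tE K [0, 0, 1] * tE K [1, 2, 2] ∈ decIdeal K 3 3 := mem_dec (tE_plus 0 [0, 1]) (tE_plus 1 [2, 2])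
  have m13 : tE K [0, 0, 1, 2] * (tE K [1] * tE K [2]) ∈ decIdeal K 3 3 := mem_dec (tE_plus 0 [0, 1, 2]) (plus_mul (tE_plus 1 []) (tE_plus 2 []))
  have m14 : tE K [0, 0, 1, 2, 2] * tE K [1] ∈ decIdeal K 3 3 := mem_dec (tE_plus 0 [0, 1, 2, 2]) (tE_plus 1 [])
  have m15 : tE K [0, 0, 2] * tE K [1, 1, 2] ∈ decIdeal K 3 3 := mem_dec (tE_plus 0 [0, 2]) (tE_plus 1 [1, 2])
  have m16 : tE K [0, 0, 2, 1, 1] * tE K [2] ∈ decIdeal K 3 3 := mem_dec (tE_plus 0 [0, 2, 1, 1]) (tE_plus 2 [])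
  have m17 : tE K [0, 0, 2, 2, 1] * tE K [1] ∈ decIdeal K 3 3 := mem_dec (tE_plus 0 [0, 2, 2, 1]) (tE_plus 1 [])
  have m18 : tE K [0, 1] * (tE K [0, 1] * tE K [2, 2]) ∈ decIdeal K 3 3 := mem_dec (tE_plus 0 [1]) (plus_mul (tE_plus 0 [1]) (tE_plus 2 [2]))
  have m19 : tE K [0, 1] * tE K [0, 2, 1, 2] ∈ decIdeal K 3 3 := mem_dec (tE_plus 0 [1]) (tE_plus 0 [2, 1, 2])
  have m20 : tE K [0, 1, 0, 1, 2] * tE K [2] ∈ decIdeal K 3 3 := mem_dec (tE_plus 0 [1, 0, 1, 2]) (tE_plus 2 [])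
  have m21 : tE K [0, 1, 0, 2] * (tE K [1] * tE K [2]) ∈ decIdeal K 3 3 := mem_dec (tE_plus 0 [1, 0, 2]) (plus_mul (tE_plus 1 []) (tE_plus 2 []))
  have m22 : tE K [0, 1, 0, 2] * tE K [1, 2] ∈ decIdeal K 3 3 := mem_dec (tE_plus 0 [1, 0, 2]) (tE_plus 1 [2])
  have m23 : tE K [0, 1, 0, 2, 1] * tE K [2] ∈ decIdeal K 3 3 := mem_dec (tE_plus 0 [1, 0, 2, 1]) (tE_plus 2 [])
  have m24 : tE K [0, 1, 1] * tE K [0, 2, 2] ∈ decIdeal K 3 3 := mem_dec (tE_plus 0 [1, 1]) (tE_plus 0 [2, 2])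
  have m25 : tE K [0, 1, 2] * (tE K [0, 2] * tE K [1]) ∈ decIdeal K 3 3 := mem_dec (tE_plus 0 [1, 2]) (plus_mul (tE_plus 0 [2]) (tE_plus 1 []))
  have m26 : tE K [0, 1, 2, 1] * tE K [0, 2] ∈ decIdeal K 3 3 := mem_dec (tE_plus 0 [1, 2, 1]) (tE_plus 0 [2])
  have m27 : sE K [0] * tE K [1, 1, 2, 2] ∈ decIdeal K 3 3 := mem_dec (sE_plus 0 []) (tE_plus 1 [1, 2, 2])
  have m28 : sE K [0, 1] * tE K [2, 2] ∈ decIdeal K 3 3 := mem_dec (sE_plus 0 [1]) (tE_plus 2 [2])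
  have m29 : sE K [1] * tE K [0, 0, 2, 2] ∈ decIdeal K 3 3 := mem_dec (sE_plus 1 []) (tE_plus 0 [0, 2, 2])
  have m30 : sE K [2] * tE K [0, 0, 1, 1] ∈ decIdeal K 3 3 := mem_dec (sE_plus 2 []) (tE_plus 0 [0, 1, 1])
  have m31 : tE K [0] * (tE K [0, 1] * (tE K [1] * tE K [2, 2])) ∈ decIdeal K 3 3 := mem_dec (tE_plus 0 []) (plus_mul (tE_plus 0 [1]) (plus_mul (tE_plus 1 []) (tE_plus 2 [2])))
  have m32 : tE K [0] * (tE K [0, 1] * tE K [1, 2, 2]) ∈ decIdeal K 3 3 := mem_dec (tE_plus 0 []) (plus_mul (tE_plus 0 [1]) (tE_plus 1 [2, 2]))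
  have m33 : tE K [0] * (tE K [0, 1, 2] * (tE K [1] * tE K [2])) ∈ decIdeal K 3 3 := mem_dec (tE_plus 0 []) (plus_mul (tE_plus 0 [1, 2]) (plus_mul (tE_plus 1 []) (tE_plus 2 [])))
  have m34 : tE K [0] * (tE K [0, 1, 2, 2] * tE K [1]) ∈ decIdeal K 3 3 := mem_dec (tE_plus 0 []) (plus_mul (tE_plus 0 [1, 2, 2]) (tE_plus 1 []))
  have m35 : tE K [0] * (tE K [0, 2] * tE K [1, 1, 2]) ∈ decIdeal K 3 3 := mem_dec (tE_plus 0 []) (plus_mul (tE_plus 0 [2]) (tE_plus 1 [1, 2]))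
  have m36 : tE K [0] * tE K [0, 2, 1, 2, 1] ∈ decIdeal K 3 3 := mem_dec (tE_plus 0 []) (tE_plus 0 [2, 1, 2, 1])
  have m37 : tE K [0] * (tE K [0, 2, 2, 1] * tE K [1]) ∈ decIdeal K 3 3 := mem_dec (tE_plus 0 []) (plus_mul (tE_plus 0 [2, 2, 1]) (tE_plus 1 []))
  have m38 : tE K [0, 0, 1] * (tE K [1, 2] * tE K [2]) ∈ decIdeal K 3 3 := mem_dec (tE_plus 0 [0, 1]) (plus_mul (tE_plus 1 [2]) (tE_plus 2 []))
  have m39 : tE K [0, 0, 1, 1] * tE K [2, 2] ∈ decIdeal K 3 3 := mem_dec (tE_plus 0 [0, 1, 1]) (tE_plus 2 [2])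
  have m40 : tE K [0, 0, 1, 1, 2] * tE K [2] ∈ decIdeal K 3 3 := mem_dec (tE_plus 0 [0, 1, 1, 2]) (tE_plus 2 [])
  have m41 : tE K [0, 0, 2] * (tE K [1] * tE K [1, 2]) ∈ decIdeal K 3 3 := mem_dec (tE_plus 0 [0, 2]) (plus_mul (tE_plus 1 []) (tE_plus 1 [2]))
  have m42 : tE K [0, 0, 2, 1] * (tE K [1] * tE K [2]) ∈ decIdeal K 3 3 := mem_dec (tE_plus 0 [0, 2, 1]) (plus_mul (tE_plus 1 []) (tE_plus 2 []))
  have m43 : tE K [0, 1] * (tE K [0, 1, 2] * tE K [2]) ∈ decIdeal K 3 3 := mem_dec (tE_plus 0 [1]) (plus_mul (tE_plus 0 [1, 2]) (tE_plus 2 []))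
  have m44 : tE K [0, 1] * (tE K [0, 2] * tE K [1, 2]) ∈ decIdeal K 3 3 := mem_dec (tE_plus 0 [1]) (plus_mul (tE_plus 0 [2]) (tE_plus 1 [2]))
  have m45 : tE K [0, 1] * (tE K [0, 2, 1] * tE K [2]) ∈ decIdeal K 3 3 := mem_dec (tE_plus 0 [1]) (plus_mul (tE_plus 0 [2, 1]) (tE_plus 2 []))
  have m46 : tE K [0, 1, 0, 1] * tE K [2, 2] ∈ decIdeal K 3 3 := mem_dec (tE_plus 0 [1, 0, 1]) (tE_plus 2 [2])
  have m47 : tE K [0, 1, 0, 2, 2] * tE K [1] ∈ decIdeal K 3 3 := mem_dec (tE_plus 0 [1, 0, 2, 2]) (tE_plus 1 [])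
  have m48 : tE K [0, 1, 1] * (tE K [0, 2] * tE K [2]) ∈ decIdeal K 3 3 := mem_dec (tE_plus 0 [1, 1]) (plus_mul (tE_plus 0 [2]) (tE_plus 2 []))
  have m49 : tE K [0, 1, 2] * tE K [0, 2, 1] ∈ decIdeal K 3 3 := mem_dec (tE_plus 0 [1, 2]) (tE_plus 0 [2, 1])
  have m50 : tE K [0, 1, 2, 0, 2] * tE K [1] ∈ decIdeal K 3 3 := mem_dec (tE_plus 0 [1, 2, 0, 2]) (tE_plus 1 [])
  exact sub_mem (sub_mem (sub_mem (sub_mem (sub_mem (sub_mem (sub_mem (sub_mem (sub_mem (sub_mem (sub_mem (sub_mem (sub_mem (sub_mem (sub_mem (sub_mem (sub_mem (sub_mem (sub_mem (sub_mem (sub_mem (sub_mem (sub_mem (sub_mem (sub_mem (sub_mem (sub_mem (sub_mem (sub_mem (sub_mem (sub_mem (sub_mem (sub_mem (sub_mem (sub_mem (sub_mem (sub_mem (sub_mem (sub_mem (sub_mem (sub_mem (sub_mem (sub_mem (sub_mem (sub_mem (sub_mem (sub_mem (sub_mem (sub_mem (sub_mem (sub_mem (sub_mem (sub_mem (add_mem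 (add_mem (add_mem (add_mem (add_mem (add_mem (add_mem (add_mem (add_mem (add_mem (add_mem (add_mem (add_mem (add_mem (add_mem (add_mem (add_mem (add_mem (add_mem (add_mem (add_mem (add_mem (add_mem (add_mem (add_mem (add_mem (add_mem (add_mem (add_mem (add_mem (add_mem (add_mem (add_mem (add_mem (add_mem (add_mem (add_mem (add_mem (add_mem (add_mem (add_mem (add_mem (add_mem (add_mem (add_mem (add_mem (add_mem (add_mem (add_mem (add_mem (add_mem (add_mem (add_mem (add_mem (add_mem (add_mem (add_mem (add_mem ((m0)) m0) m0) m0) m0) m1) m1) m1) m2) m2) m2) m2) m2) m3) m4) m5) m5) m5) m5) m5) m6) m7) m7) m7) m8) m9) m10) m10) m11) m11) m11) m11) m11) m12) m13) m13) m13) m14) m15) m16) m17) m17) m17) m18) m18) m18) m18) m18) m19) m20) m21) m22) m23) m23) m23) m24) m25) m25) m26) m27) m27) m27) m27) m27) m28) m28) m28) m29) m29) m29) m29) m29) m30) m31) m31) m31) m31) m31) m32) m33) m33) m33) m34) m35) m36) m37) m37) m38) m39) m39) m39) m39) m39) m40) m41) m42) m43) m44) m44) m45) m45) m45) m46) m46)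 m46) m46) m46) m47) m48) m49) m50) m50

set_option maxHeartbeats 4000000 in
set_option maxRecDepth 8000 in
lemma key {K : Type} [Field K] :
    (sW K [0] * (trW K 3 3 [1] * trW K 3 3 [1, 2, 2])
      + sW K [0] * (trW K 3 3 [1] * trW K 3 3 [1, 2, 2])
      + sW K [0] * (trW K 3 3 [1] * trW K 3 3 [1, 2, 2])
      + sW K [0] * (trW K 3 3 [1] * trW K 3 3 [1, 2, 2])
      + sW K [0] * (trW K 3 3 [1] * trW K 3 3 [1, 2, 2])
      + sW K [0, 1] * (trW K 3 3 [2] * trW K 3 3 [2])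
      + sW K [0, 1] * (trW K 3 3 [2] * trW K 3 3 [2])
      + sW K [0, 1] * (trW K 3 3 [2] * trW K 3 3 [2])
      + sW K [1] * (trW K 3 3 [0] * trW K 3 3 [0, 2, 2])
      + sW K [1] * (trW K 3 3 [0] * trW K 3 3 [0, 2, 2])
      + sW K [1] * (trW K 3 3 [0] * trW K 3 3 [0, 2, 2])
      + sW K [1] * (trW K 3 3 [0] * trW K 3 3 [0, 2, 2])
      + sW K [1] * (trW K 3 3 [0] * trW K 3 3 [0, 2, 2])
      + sW K [2] * (trW K 3 3 [0] * trW K 3 3 [0, 1, 1])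
      + trW K 3 3 [0] * (trW K 3 3 [0, 1] * (trW K 3 3 [1, 2] * trW K 3 3 [2]))
      + trW K 3 3 [0] * (trW K 3 3 [0, 1, 1] * trW K 3 3 [2, 2])
      + trW K 3 3 [0] * (trW K 3 3 [0, 1, 1] * trW K 3 3 [2, 2])
      + trW K 3 3 [0] * (trW K 3 3 [0, 1, 1] * trW K 3 3 [2, 2])
      + trW K 3 3 [0] * (trW K 3 3 [0, 1, 1] * trW K 3 3 [2, 2])
      + trW K 3 3 [0] * (trW K 3 3 [0, 1, 1] * trW K 3 3 [2, 2])
      + trW K 3 3 [0] * (trW K 3 3 [0, 1, 1, 2] * trW K 3 3 [2])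
      + trW K 3 3 [0] * trW K 3 3 [0, 1, 1, 2, 2]
      + trW K 3 3 [0] * trW K 3 3 [0, 1, 1, 2, 2]
      + trW K 3 3 [0] * trW K 3 3 [0, 1, 1, 2, 2]
      + trW K 3 3 [0] * (trW K 3 3 [0, 2] * (trW K 3 3 [1] * trW K 3 3 [1, 2]))
      + trW K 3 3 [0] * (trW K 3 3 [0, 2, 1] * trW K 3 3 [1, 2])
      + trW K 3 3 [0] * trW K 3 3 [0, 2, 2, 1, 1]
      + trW K 3 3 [0] * trW K 3 3 [0, 2, 2, 1, 1]
      + trW K 3 3 [0, 0, 1] * (trW K 3 3 [1] * trW K 3 3 [2, 2])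
      + trW K 3 3 [0, 0, 1] * (trW K 3 3 [1] * trW K 3 3 [2, 2])
      + trW K 3 3 [0, 0, 1] * (trW K 3 3 [1] * trW K 3 3 [2, 2])
      + trW K 3 3 [0, 0, 1] * (trW K 3 3 [1] * trW K 3 3 [2, 2])
      + trW K 3 3 [0, 0, 1] * (trW K 3 3 [1] * trW K 3 3 [2, 2])
      + trW K 3 3 [0, 0, 1] * trW K 3 3 [1, 2, 2]
      + trW K 3 3 [0, 0, 1, 2] * (trW K 3 3 [1] * trW K 3 3 [2])
      + trW K 3 3 [0, 0, 1, 2] * (trW K 3 3 [1] * trW K 3 3 [2])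
      + trW K 3 3 [0, 0, 1, 2] * (trW K 3 3 [1] * trW K 3 3 [2])
      + trW K 3 3 [0, 0, 1, 2, 2] * trW K 3 3 [1]
      + trW K 3 3 [0, 0, 2] * trW K 3 3 [1, 1, 2]
      + trW K 3 3 [0, 0, 2, 1, 1] * trW K 3 3 [2]
      + trW K 3 3 [0, 0, 2, 2, 1] * trW K 3 3 [1]
      + trW K 3 3 [0, 0, 2, 2, 1] * trW K 3 3 [1]
      + trW K 3 3 [0, 0, 2, 2, 1] * trW K 3 3 [1]
      + trW K 3 3 [0, 1] * (trW K 3 3 [0, 1] * trW K 3 3 [2, 2])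
      + trW K 3 3 [0, 1] * (trW K 3 3 [0, 1] * trW K 3 3 [2, 2])
      + trW K 3 3 [0, 1] * (trW K 3 3 [0, 1] * trW K 3 3 [2, 2])
      + trW K 3 3 [0, 1] * (trW K 3 3 [0, 1] * trW K 3 3 [2, 2])
      + trW K 3 3 [0, 1] * (trW K 3 3 [0, 1] * trW K 3 3 [2, 2])
      + trW K 3 3 [0, 1] * trW K 3 3 [0, 2, 1, 2]
      + trW K 3 3 [0, 1, 0, 1, 2] * trW K 3 3 [2]
      + trW K 3 3 [0, 1, 0, 2] * (trW K 3 3 [1] * trW K 3 3 [2])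
      + trW K 3 3 [0, 1, 0, 2] * trW K 3 3 [1, 2]
      + trW K 3 3 [0, 1, 0, 2, 1] * trW K 3 3 [2]
      + trW K 3 3 [0, 1, 0, 2, 1] * trW K 3 3 [2]
      + trW K 3 3 [0, 1, 0, 2, 1] * trW K 3 3 [2]
      + trW K 3 3 [0, 1, 1] * trW K 3 3 [0, 2, 2]
      + trW K 3 3 [0, 1, 2] * (trW K 3 3 [0, 2] * trW K 3 3 [1])
      + trW K 3 3 [0, 1, 2] * (trW K 3 3 [0, 2] * trW K 3 3 [1])
      + trW K 3 3 [0, 1, 2, 1] * trW K 3 3 [0, 2]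
      - sW K [0] * trW K 3 3 [1, 1, 2, 2]
      - sW K [0] * trW K 3 3 [1, 1, 2, 2]
      - sW K [0] * trW K 3 3 [1, 1, 2, 2]
      - sW K [0] * trW K 3 3 [1, 1, 2, 2]
      - sW K [0] * trW K 3 3 [1, 1, 2, 2]
      - sW K [0, 1] * trW K 3 3 [2, 2]
      - sW K [0, 1] * trW K 3 3 [2, 2]
      - sW K [0, 1] * trW K 3 3 [2, 2]
      - sW K [1] * trW K 3 3 [0, 0, 2, 2]
      - sW K [1] * trW K 3 3 [0, 0, 2, 2]
      - sW K [1] * trW K 3 3 [0, 0, 2, 2]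
      - sW K [1] * trW K 3 3 [0, 0, 2, 2]
      - sW K [1] * trW K 3 3 [0, 0, 2, 2]
      - sW K [2] * trW K 3 3 [0, 0, 1, 1]
      - trW K 3 3 [0] * (trW K 3 3 [0, 1] * (trW K 3 3 [1] * trW K 3 3 [2, 2]))
      - trW K 3 3 [0] * (trW K 3 3 [0, 1] * (trW K 3 3 [1] * trW K 3 3 [2, 2]))
      - trW K 3 3 [0] * (trW K 3 3 [0, 1] * (trW K 3 3 [1] * trW K 3 3 [2, 2]))
      - trW K 3 3 [0] * (trW K 3 3 [0, 1] * (trW K 3 3 [1] * trW K 3 3 [2, 2]))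
      - trW K 3 3 [0] * (trW K 3 3 [0, 1] * (trW K 3 3 [1] * trW K 3 3 [2, 2]))
      - trW K 3 3 [0] * (trW K 3 3 [0, 1] * trW K 3 3 [1, 2, 2])
      - trW K 3 3 [0] * (trW K 3 3 [0, 1, 2] * (trW K 3 3 [1] * trW K 3 3 [2]))
      - trW K 3 3 [0] * (trW K 3 3 [0, 1, 2] * (trW K 3 3 [1] * trW K 3 3 [2]))
      - trW K 3 3 [0] * (trW K 3 3 [0, 1, 2] * (trW K 3 3 [1] * trW K 3 3 [2]))
      - trW K 3 3 [0] * (trW K 3 3 [0, 1, 2, 2] * trW K 3 3 [1])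
      - trW K 3 3 [0] * (trW K 3 3 [0, 2] * trW K 3 3 [1, 1, 2])
      - trW K 3 3 [0] * trW K 3 3 [0, 2, 1, 2, 1]
      - trW K 3 3 [0] * (trW K 3 3 [0, 2, 2, 1] * trW K 3 3 [1])
      - trW K 3 3 [0] * (trW K 3 3 [0, 2, 2, 1] * trW K 3 3 [1])
      - trW K 3 3 [0, 0, 1] * (trW K 3 3 [1, 2] * trW K 3 3 [2])
      - trW K 3 3 [0, 0, 1, 1] * trW K 3 3 [2, 2]
      - trW K 3 3 [0, 0, 1, 1] * trW K 3 3 [2, 2]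
      - trW K 3 3 [0, 0, 1, 1] * trW K 3 3 [2, 2]
      - trW K 3 3 [0, 0, 1, 1] * trW K 3 3 [2, 2]
      - trW K 3 3 [0, 0, 1, 1] * trW K 3 3 [2, 2]
      - trW K 3 3 [0, 0, 1, 1, 2] * trW K 3 3 [2]
      - trW K 3 3 [0, 0, 2] * (trW K 3 3 [1] * trW K 3 3 [1, 2])
      - trW K 3 3 [0, 0, 2, 1] * (trW K 3 3 [1] * trW K 3 3 [2])
      - trW K 3 3 [0, 1] * (trW K 3 3 [0, 1, 2] * trW K 3 3 [2])
      - trW K 3 3 [0, 1] * (trW K 3 3 [0, 2] * trW K 3 3 [1, 2])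
      - trW K 3 3 [0, 1] * (trW K 3 3 [0, 2] * trW K 3 3 [1, 2])
      - trW K 3 3 [0, 1] * (trW K 3 3 [0, 2, 1] * trW K 3 3 [2])
      - trW K 3 3 [0, 1] * (trW K 3 3 [0, 2, 1] * trW K 3 3 [2])
      - trW K 3 3 [0, 1] * (trW K 3 3 [0, 2, 1] * trW K 3 3 [2])
      - trW K 3 3 [0, 1, 0, 1] * trW K 3 3 [2, 2]
      - trW K 3 3 [0, 1, 0, 1] * trW K 3 3 [2, 2]
      - trW K 3 3 [0, 1, 0, 1] * trW K 3 3 [2, 2]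
      - trW K 3 3 [0, 1, 0, 1] * trW K 3 3 [2, 2]
      - trW K 3 3 [0, 1, 0, 1] * trW K 3 3 [2, 2]
      - trW K 3 3 [0, 1, 0, 2, 2] * trW K 3 3 [1]
      - trW K 3 3 [0, 1, 1] * (trW K 3 3 [0, 2] * trW K 3 3 [2])
      - trW K 3 3 [0, 1, 2] * trW K 3 3 [0, 2, 1]
      - trW K 3 3 [0, 1, 2, 0, 2] * trW K 3 3 [1]
      - trW K 3 3 [0, 1, 2, 0, 2] * trW K 3 3 [1] : MvPolynomial (Fin 3 × Fin 3 × Fin 3) K)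
      = 3 * (trW K 3 3 [0, 0, 1, 1, 2, 2] + trW K 3 3 [0, 0, 2, 2, 1, 1]) := by
  have h0 := I4gen (W K [0]) (W K [0, 1]) (W K [1]) (W K [2, 2])
  simp only [W_mul, List.cons_append, List.nil_append, trWW, sWW] at h0
  rw [show trW K 3 3 [1, 0, 0, 1, 2, 2] = trW K 3 3 [0, 0, 1, 2, 2, 1] from trW_rot [1] [0, 0, 1, 2, 2]] at h0
  rw [show trW K 3 3 [1, 0, 1, 0, 2, 2] = trW K 3 3 [0, 1, 0, 2, 2, 1] from trW_rot [1] [0, 1, 0, 2, 2]] at h0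
  rw [show trW K 3 3 [1, 0, 1, 2, 2] = trW K 3 3 [0, 1, 2, 2, 1] from trW_rot [1] [0, 1, 2, 2]] at h0
  rw [show trW K 3 3 [1, 0, 2, 2] = trW K 3 3 [0, 2, 2, 1] from trW_rot [1] [0, 2, 2]] at h0
  have h1 := I4gen (W K [0]) (W K [0, 1]) (W K [1, 2]) (W K [2])
  simp only [W_mul, List.cons_append, List.nil_append, trWW, sWW] at h1
  rw [show trW K 3 3 [1, 2, 0, 0, 1, 2] = trW K 3 3 [0, 0, 1, 2, 1, 2] from trW_rot [1, 2] [0, 0, 1, 2]] at h1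
  rw [show trW K 3 3 [1, 2, 0, 1, 0, 2] = trW K 3 3 [0, 1, 0, 2, 1, 2] from trW_rot [1, 2] [0, 1, 0, 2]] at h1
  rw [show trW K 3 3 [1, 2, 0, 1, 2] = trW K 3 3 [0, 1, 2, 1, 2] from trW_rot [1, 2] [0, 1, 2]] at h1
  rw [show trW K 3 3 [1, 2, 0, 2] = trW K 3 3 [0, 2, 1, 2] from trW_rot [1, 2] [0, 2]] at h1
  rw [show trW K 3 3 [0, 1, 2, 0, 1] = trW K 3 3 [0, 1, 0, 1, 2] from trW_rot [0, 1, 2] [0, 1]] at h1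
  have h2 := I4gen (W K [0]) (W K [0, 1]) (W K [2]) (W K [2, 1])
  simp only [W_mul, List.cons_append, List.nil_append, trWW, sWW] at h2
  rw [show trW K 3 3 [0, 2, 0, 1, 2, 1] = trW K 3 3 [0, 1, 2, 1, 0, 2] from trW_rot [0, 2] [0, 1, 2, 1]] at h2
  rw [show trW K 3 3 [2, 0, 0, 1, 2, 1] = trW K 3 3 [0, 0, 1, 2, 1, 2] from trW_rot [2] [0, 0, 1, 2, 1]] at h2
  rw [show trW K 3 3 [2, 0, 1, 0, 2, 1] = trW K 3 3 [0, 1, 0, 2, 1, 2] from trW_rot [2] [0, 1, 0, 2, 1]] at h2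
  rw [show trW K 3 3 [2, 0, 1, 2, 1] = trW K 3 3 [0, 1, 2, 1, 2] from trW_rot [2] [0, 1, 2, 1]] at h2
  rw [show trW K 3 3 [2, 0, 2, 1] = trW K 3 3 [0, 2, 1, 2] from trW_rot [2] [0, 2, 1]] at h2
  rw [show trW K 3 3 [2, 2, 1] = trW K 3 3 [1, 2, 2] from trW_rot [2, 2] [1]] at h2
  rw [show trW K 3 3 [0, 2, 0, 1] = trW K 3 3 [0, 1, 0, 2] from trW_rot [0, 2] [0, 1]] at h2
  rw [show trW K 3 3 [2, 1] = trW K 3 3 [1, 2] from trW_rot [2] [1]] at h2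
  have h3 := I4gen (W K [0]) (W K [0, 1, 2]) (W K [1]) (W K [2])
  simp only [W_mul, List.cons_append, List.nil_append, trWW, sWW] at h3
  rw [show trW K 3 3 [1, 0, 0, 1, 2, 2] = trW K 3 3 [0, 0, 1, 2, 2, 1] from trW_rot [1] [0, 0, 1, 2, 2]] at h3
  rw [show trW K 3 3 [1, 0, 1, 2, 0, 2] = trW K 3 3 [0, 1, 2, 0, 2, 1] from trW_rot [1] [0, 1, 2, 0, 2]] at h3
  rw [show trW K 3 3 [1, 0, 1, 2, 2] = trW K 3 3 [0, 1, 2, 2, 1] from trW_rot [1] [0, 1, 2, 2]] at h3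
  rw [show trW K 3 3 [1, 0, 2] = trW K 3 3 [0, 2, 1] from trW_rot [1] [0, 2]] at h3
  have h4 := I4gen (W K [0]) (W K [0, 2]) (W K [1]) (W K [1, 2])
  simp only [W_mul, List.cons_append, List.nil_append, trWW, sWW] at h4
  rw [show trW K 3 3 [0, 2, 0, 1, 1, 2] = trW K 3 3 [0, 1, 1, 2, 0, 2] from trW_rot [0, 2] [0, 1, 1, 2]] at h4
  rw [show trW K 3 3 [0, 2, 1, 0, 1, 2] = trW K 3 3 [0, 1, 2, 0, 2, 1] from trW_rot [0, 2, 1] [0, 1, 2]] at h4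
  rw [show trW K 3 3 [1, 0, 0, 2, 1, 2] = trW K 3 3 [0, 0, 2, 1, 2, 1] from trW_rot [1] [0, 0, 2, 1, 2]] at h4
  rw [show trW K 3 3 [1, 0, 2, 0, 1, 2] = trW K 3 3 [0, 1, 2, 1, 0, 2] from trW_rot [1, 0, 2] [0, 1, 2]] at h4
  rw [show trW K 3 3 [1, 0, 2, 1, 2] = trW K 3 3 [0, 2, 1, 2, 1] from trW_rot [1] [0, 2, 1, 2]] at h4
  rw [show trW K 3 3 [1, 0, 1, 2] = trW K 3 3 [0, 1, 2, 1] from trW_rot [1] [0, 1, 2]] at h4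
  rw [show trW K 3 3 [0, 2, 0, 1, 2] = trW K 3 3 [0, 1, 2, 0, 2] from trW_rot [0, 2] [0, 1, 2]] at h4
  have h5 := I4gen (W K [0]) (W K [0, 2, 1]) (W K [1]) (W K [2])
  simp only [W_mul, List.cons_append, List.nil_append, trWW, sWW] at h5
  rw [show trW K 3 3 [0, 2, 1, 0, 1, 2] = trW K 3 3 [0, 1, 2, 0, 2, 1] from trW_rot [0, 2, 1] [0, 1, 2]] at h5
  rw [show trW K 3 3 [0, 2, 1, 1, 0, 2] = trW K 3 3 [0, 2, 0, 2, 1, 1] from trW_rot [0, 2, 1, 1] [0, 2]] at h5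
  rw [show trW K 3 3 [1, 0, 0, 2, 1, 2] = trW K 3 3 [0, 0, 2, 1, 2, 1] from trW_rot [1] [0, 0, 2, 1, 2]] at h5
  rw [show trW K 3 3 [1, 0, 2, 1, 0, 2] = trW K 3 3 [0, 2, 1, 0, 2, 1] from trW_rot [1] [0, 2, 1, 0, 2]] at h5
  rw [show trW K 3 3 [1, 0, 2, 1, 2] = trW K 3 3 [0, 2, 1, 2, 1] from trW_rot [1] [0, 2, 1, 2]] at h5
  rw [show trW K 3 3 [1, 0, 2] = trW K 3 3 [0, 2, 1] from trW_rot [1] [0, 2]] at h5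
  rw [show trW K 3 3 [0, 2, 1, 0, 2] = trW K 3 3 [0, 2, 0, 2, 1] from trW_rot [0, 2, 1] [0, 2]] at h5
  have h6 := I4gen (W K [0]) (W K [1]) (W K [1, 0]) (W K [2, 2])
  simp only [W_mul, List.cons_append, List.nil_append, trWW, sWW] at h6
  rw [show trW K 3 3 [1, 0, 1, 0, 2, 2] = trW K 3 3 [0, 1, 0, 2, 2, 1] from trW_rot [1] [0, 1, 0, 2, 2]] at h6
  rw [show trW K 3 3 [1, 1, 0, 0, 2, 2] = trW K 3 3 [0, 0, 2, 2, 1, 1] from trW_rot [1, 1] [0, 0, 2, 2]] at h6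
  rw [show trW K 3 3 [1, 0, 0, 1, 2, 2] = trW K 3 3 [0, 0, 1, 2, 2, 1] from trW_rot [1] [0, 0, 1, 2, 2]] at h6
  rw [show trW K 3 3 [1, 1, 0, 2, 2] = trW K 3 3 [0, 2, 2, 1, 1] from trW_rot [1, 1] [0, 2, 2]] at h6
  rw [show trW K 3 3 [1, 0, 1, 2, 2] = trW K 3 3 [0, 1, 2, 2, 1] from trW_rot [1] [0, 1, 2, 2]] at h6
  rw [show trW K 3 3 [1, 0, 0, 2, 2] = trW K 3 3 [0, 0, 2, 2, 1] from trW_rot [1] [0, 0, 2, 2]] at h6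
  rw [show trW K 3 3 [1, 0, 2, 2] = trW K 3 3 [0, 2, 2, 1] from trW_rot [1] [0, 2, 2]] at h6
  rw [show trW K 3 3 [0, 1, 0] = trW K 3 3 [0, 0, 1] from trW_rot [0, 1] [0]] at h6
  rw [show trW K 3 3 [1, 1, 0] = trW K 3 3 [0, 1, 1] from trW_rot [1, 1] [0]] at h6
  rw [show trW K 3 3 [0, 1, 1, 0] = trW K 3 3 [0, 0, 1, 1] from trW_rot [0, 1, 1] [0]] at h6
  rw [show trW K 3 3 [1, 0] = trW K 3 3 [0, 1] from trW_rot [1] [0]] at h6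
  have h7 := I4gen (W K [0]) (W K [1]) (W K [1, 0, 2]) (W K [2])
  simp only [W_mul, List.cons_append, List.nil_append, trWW, sWW] at h7
  rw [show trW K 3 3 [1, 0, 1, 0, 2, 2] = trW K 3 3 [0, 1, 0, 2, 2, 1] from trW_rot [1] [0, 1, 0, 2, 2]] at h7
  rw [show trW K 3 3 [1, 1, 0, 2, 0, 2] = trW K 3 3 [0, 2, 0, 2, 1, 1] from trW_rot [1, 1] [0, 2, 0, 2]] at h7
  rw [show trW K 3 3 [1, 0, 2, 0, 1, 2] = trW K 3 3 [0, 1, 2, 1, 0, 2] from trW_rot [1, 0, 2] [0, 1, 2]] at h7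
  rw [show trW K 3 3 [1, 0, 2, 1, 0, 2] = trW K 3 3 [0, 2, 1, 0, 2, 1] from trW_rot [1] [0, 2, 1, 0, 2]] at h7
  rw [show trW K 3 3 [1, 1, 0, 2, 2] = trW K 3 3 [0, 2, 2, 1, 1] from trW_rot [1, 1] [0, 2, 2]] at h7
  rw [show trW K 3 3 [1, 0, 2, 1, 2] = trW K 3 3 [0, 2, 1, 2, 1] from trW_rot [1] [0, 2, 1, 2]] at h7
  rw [show trW K 3 3 [1, 0, 2, 0, 2] = trW K 3 3 [0, 2, 0, 2, 1] from trW_rot [1] [0, 2, 0, 2]] at h7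
  rw [show trW K 3 3 [1, 0, 2] = trW K 3 3 [0, 2, 1] from trW_rot [1] [0, 2]] at h7
  rw [show trW K 3 3 [1, 1, 0, 2] = trW K 3 3 [0, 2, 1, 1] from trW_rot [1, 1] [0, 2]] at h7
  rw [show trW K 3 3 [1, 0, 2, 2] = trW K 3 3 [0, 2, 2, 1] from trW_rot [1] [0, 2, 2]] at h7
  have h8 := I4gen (W K [0]) (W K [1]) (W K [1, 2]) (W K [2, 0])
  simp only [W_mul, List.cons_append, List.nil_append, trWW, sWW] at h8
  rw [show trW K 3 3 [0, 1, 1, 2, 2, 0] = trW K 3 3 [0, 0, 1, 1, 2, 2] from trW_rot [0, 1, 1, 2, 2] [0]] at h8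
  rw [show trW K 3 3 [0, 1, 2, 1, 2, 0] = trW K 3 3 [0, 0, 1, 2, 1, 2] from trW_rot [0, 1, 2, 1, 2] [0]] at h8
  rw [show trW K 3 3 [1, 0, 1, 2, 2, 0] = trW K 3 3 [0, 1, 0, 1, 2, 2] from trW_rot [1, 0, 1, 2, 2] [0]] at h8
  rw [show trW K 3 3 [1, 1, 2, 0, 2, 0] = trW K 3 3 [0, 1, 1, 2, 0, 2] from trW_rot [1, 1, 2, 0, 2] [0]] at h8
  rw [show trW K 3 3 [1, 2, 0, 1, 2, 0] = trW K 3 3 [0, 1, 2, 0, 1, 2] from trW_rot [1, 2] [0, 1, 2, 0]] at h8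
  rw [show trW K 3 3 [1, 2, 1, 0, 2, 0] = trW K 3 3 [0, 1, 2, 1, 0, 2] from trW_rot [1, 2, 1, 0, 2] [0]] at h8
  rw [show trW K 3 3 [1, 1, 2, 2, 0] = trW K 3 3 [0, 1, 1, 2, 2] from trW_rot [1, 1, 2, 2] [0]] at h8
  rw [show trW K 3 3 [1, 2, 1, 2, 0] = trW K 3 3 [0, 1, 2, 1, 2] from trW_rot [1, 2, 1, 2] [0]] at h8
  rw [show trW K 3 3 [0, 1, 2, 2, 0] = trW K 3 3 [0, 0, 1, 2, 2] from trW_rot [0, 1, 2, 2] [0]] at h8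
  rw [show trW K 3 3 [1, 2, 0, 2, 0] = trW K 3 3 [0, 1, 2, 0, 2] from trW_rot [1, 2, 0, 2] [0]] at h8
  rw [show trW K 3 3 [0, 1, 2, 0] = trW K 3 3 [0, 0, 1, 2] from trW_rot [0, 1, 2] [0]] at h8
  rw [show trW K 3 3 [1, 0, 2, 0] = trW K 3 3 [0, 1, 0, 2] from trW_rot [1, 0, 2] [0]] at h8
  rw [show trW K 3 3 [1, 2, 2, 0] = trW K 3 3 [0, 1, 2, 2] from trW_rot [1, 2, 2] [0]] at h8
  rw [show trW K 3 3 [1, 2, 0] = trW K 3 3 [0, 1, 2] from trW_rot [1, 2] [0]] at h8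
  rw [show trW K 3 3 [0, 2, 0] = trW K 3 3 [0, 0, 2] from trW_rot [0, 2] [0]] at h8
  rw [show trW K 3 3 [2, 0] = trW K 3 3 [0, 2] from trW_rot [2] [0]] at h8
  have h9 := J4gen (W K [0]) (W K [1]) (W K [1, 2, 2])
  simp only [W_mul, List.cons_append, List.nil_append, trWW, sWW] at h9
  rw [show trW K 3 3 [1, 0, 0, 1, 2, 2] = trW K 3 3 [0, 0, 1, 2, 2, 1] from trW_rot [1] [0, 0, 1, 2, 2]] at h9
  rw [show trW K 3 3 [1, 0, 1, 2, 2] = trW K 3 3 [0, 1, 2, 2, 1] from trW_rot [1] [0, 1, 2, 2]] at h9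
  have h10 := J4gen (W K [0, 1]) (W K [2]) (W K [2])
  simp only [W_mul, List.cons_append, List.nil_append, trWW, sWW] at h10
  rw [show trW K 3 3 [2, 0, 1, 0, 1, 2] = trW K 3 3 [0, 1, 0, 1, 2, 2] from trW_rot [2] [0, 1, 0, 1, 2]] at h10
  rw [show trW K 3 3 [2, 0, 1, 2] = trW K 3 3 [0, 1, 2, 2] from trW_rot [2] [0, 1, 2]] at h10
  have h11 := J4gen (W K [1]) (W K [0]) (W K [0, 2, 2])
  simp only [W_mul, List.cons_append, List.nil_append, trWW, sWW] at h11
  rw [show trW K 3 3 [1, 1, 0, 0, 2, 2] = trW K 3 3 [0, 0, 2, 2, 1, 1] from trW_rot [1, 1] [0, 0, 2, 2]] at h11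
  rw [show trW K 3 3 [1, 0, 1, 0, 2, 2] = trW K 3 3 [0, 1, 0, 2, 2, 1] from trW_rot [1] [0, 1, 0, 2, 2]] at h11
  rw [show trW K 3 3 [1, 0, 2, 2] = trW K 3 3 [0, 2, 2, 1] from trW_rot [1] [0, 2, 2]] at h11
  rw [show trW K 3 3 [1, 0, 0, 2, 2] = trW K 3 3 [0, 0, 2, 2, 1] from trW_rot [1] [0, 0, 2, 2]] at h11
  rw [show trW K 3 3 [1, 1, 0, 2, 2] = trW K 3 3 [0, 2, 2, 1, 1] from trW_rot [1, 1] [0, 2, 2]] at h11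
  rw [show trW K 3 3 [1, 0] = trW K 3 3 [0, 1] from trW_rot [1] [0]] at h11
  rw [show trW K 3 3 [1, 1, 0] = trW K 3 3 [0, 1, 1] from trW_rot [1, 1] [0]] at h11
  have h12 := J4gen (W K [2]) (W K [0]) (W K [0, 1, 1])
  simp only [W_mul, List.cons_append, List.nil_append, trWW, sWW] at h12
  rw [show trW K 3 3 [2, 2, 0, 0, 1, 1] = trW K 3 3 [0, 0, 1, 1, 2, 2] from trW_rot [2, 2] [0, 0, 1, 1]] at h12
  rw [show trW K 3 3 [2, 0, 2, 0, 1, 1] = trW K 3 3 [0, 1, 1, 2, 0, 2] from trW_rot [2, 0, 2] [0, 1, 1]] at h12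
  rw [show trW K 3 3 [0, 2, 2, 0, 1, 1] = trW K 3 3 [0, 1, 1, 0, 2, 2] from trW_rot [0, 2, 2] [0, 1, 1]] at h12
  rw [show trW K 3 3 [2, 0, 1, 1] = trW K 3 3 [0, 1, 1, 2] from trW_rot [2] [0, 1, 1]] at h12
  rw [show trW K 3 3 [2, 0, 0, 1, 1] = trW K 3 3 [0, 0, 1, 1, 2] from trW_rot [2] [0, 0, 1, 1]] at h12
  rw [show trW K 3 3 [0, 2, 0, 1, 1] = trW K 3 3 [0, 1, 1, 0, 2] from trW_rot [0, 2] [0, 1, 1]] at h12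
  rw [show trW K 3 3 [2, 2, 0, 1, 1] = trW K 3 3 [0, 1, 1, 2, 2] from trW_rot [2, 2] [0, 1, 1]] at h12
  rw [show trW K 3 3 [2, 0] = trW K 3 3 [0, 2] from trW_rot [2] [0]] at h12
  rw [show trW K 3 3 [2, 2, 0] = trW K 3 3 [0, 2, 2] from trW_rot [2, 2] [0]] at h12
  linear_combination (3 : MvPolynomial (Fin 3 × Fin 3 × Fin 3) K) * h0 + (2 : MvPolynomial (Fin 3 × Fin 3 × Fin 3) K) * h1 - (3 : MvPolynomial (Fin 3 × Fin 3 × Fin 3) K) * h2 + (3 : MvPolynomial (Fin 3 × Fin 3 × Fin 3) K) * h3 + (1 : MvPolynomial (Fin 3 × Fin 3 × Fin 3) K) * h4 - (1 : MvPolynomial (Fin 3 × Fin 3 × Fin 3) K) * h5 + (2 : MvPolynomial (Fin 3 × Fin 3 × Fin 3) K) * h6 + (1 : MvPolynomial (Fin 3 × Fin 3 × Fin 3) K) * h7 - (2 : MvPolynomial (Fin 3 × Fin 3 × Fin 3) K) * h8 - (5 : MvPolynomial (Fin 3 × Fin 3 × Fin 3) K) * h9 - (3 : MvPolynomial (Fin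 3 × Fin 3 × Fin 3) K) * h10 - (5 : MvPolynomial (Fin 3 × Fin 3 × Fin 3) K) * h11 - (1 : MvPolynomial (Fin 3 × Fin 3 × Fin 3) K) * h12

set_option maxHeartbeats 2000000 in
set_option maxRecDepth 8000 in
lemma bigS_val {K : Type} [Field K] :
    ((bigS K : invRing K 3 3) : MvPolynomial (Fin 3 × Fin 3 × Fin 3) K)
      = 3 * (trW K 3 3 [0, 0, 1, 1, 2, 2] + trW K 3 3 [0, 0, 2, 2, 1, 1]) := by
  rw [← key]
  rfl

set_option maxHeartbeats 1000000 in
set_option maxRecDepth 8000 in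
/-- In characteristic different from `3`, the sum `tr(X₁²X₂²X₃²) + tr(X₁²X₃²X₂²)` is a
decomposable invariant of `R_{3,3}`. -/
theorem linDep_tr112233_charNeThree (K : Type) [Field K] [Infinite K] (hp : ringChar K ≠ 3) :
    ∃ h ∈ decIdeal K 3 3, (h : MvPolynomial (Fin 3 × Fin 3 × Fin 3) K) =
      trW K 3 3 [0, 0, 1, 1, 2, 2] + trW K 3 3 [0, 0, 2, 2, 1, 1] := by
  have h3 : (3 : K) ≠ 0 := by
    intro h
    have hdvd : ringChar K ∣ 3 := by
      have := ringChar.charP K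
      exact (CharP.cast_eq_zero_iff K (ringChar K) 3).mp (by exact_mod_cast h)
    rcases (Nat.prime_three.eq_one_or_self_of_dvd _ hdvd) with h1 | h1
    · haveI : CharP K 1 := h1 ▸ ringChar.charP K
      exact CharP.char_ne_one K 1 rfl
    · exact hp h1
  refine ⟨(3 : K)⁻¹ • bigS K, ?_, ?_⟩
  · rw [Algebra.smul_def]
    exact Ideal.mul_mem_left _ _ bigS_mem
  · rw [SetLike.val_smul, bigS_val,
      show ((3 : MvPolynomial (Fin 3 × Fin 3 × Fin 3) K)) = MvPolynomial.C (3 : K) by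
        rw [map_ofNat],
      MvPolynomial.smul_eq_C_mul, ← mul_assoc, ← MvPolynomial.C_mul,
      inv_mul_cancel₀ h3, MvPolynomial.C_1, one_mul]
end
end
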